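/- arXiv:2604.10330 — 10 statements merged into one kernel-verified Lean document; each statement's English description precedes it below -/
import Mathlib

section
/- Let v₁, v₂, v₃, v₄, v₅, v₆ ∈ ℝ² be the vertices, listed in cyclic order, of a convex equilateral hexagon (all six side lengths |v_{i+1} − v_i| equal, indices mod 6), whose interior angles x₁, …, x₆ all lie in the open interval (π/2, π). If x₁ + x₃ + x₅ = 2π and x₂ + x₄ + x₆ = 2π, then the hexagon is centrally symmetric: there exists a point c ∈ ℝ² such that v_{i+3} = 2c − v_i for i = 1, 2, 3 (indices mod 6). -/
open Real EuclideanGeometry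

open scoped RealInnerProductSpace

noncomputable def ce (θ : ℝ) : ℂ := Complex.exp (θ * Complex.I)

lemma ce_add (a b : ℝ) : ce a * ce b = ce (a + b) := by
  unfold ce; rw [← Complex.exp_add]; push_cast; ring_nf

lemma ce_re (a : ℝ) : (ce a).re = Real.cos a := Complex.exp_ofReal_mul_I_re a

lemma ce_im (a : ℝ) : (ce a).im = Real.sin a := Complex.exp_ofReal_mul_I_im a

lemma ce_zero : ce 0 = 1 := by simp [ce]

lemma ce_pi (a : ℝ) : ce (π + a) = - ce a := by
  apply Complex.ext <;>
    simp only [Complex.neg_re, Complex.neg_im, ce_re, ce_im, Real.cos_add, Real.sin_add,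
      Real.cos_pi, Real.sin_pi] <;> ring

lemma one_sub_ce (d : ℝ) : 1 - ce d = (-2 * Real.sin (d/2) : ℝ) * Complex.I * ce (d/2) := by
  have h1 : Real.cos d = 1 - 2 * Real.sin (d/2) ^ 2 := by
    have h := Real.cos_two_mul (d/2)
    have h' : 2 * (d/2) = d := by ring
    have hsc := Real.sin_sq_add_cos_sq (d/2)
    rw [h'] at h; nlinarith
  have h2 : Real.sin d = 2 * Real.sin (d/2) * Real.cos (d/2) := by
    have h := Real.sin_two_mul (d/2)
    have h' : 2 * (d/2) = d := by ring
    rw [h'] at h; linarith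
  apply Complex.ext <;>
    simp only [Complex.sub_re, Complex.sub_im, Complex.one_re, Complex.one_im, Complex.mul_re,
      Complex.mul_im, Complex.ofReal_re, Complex.ofReal_im, Complex.I_re, Complex.I_im,
      ce_re, ce_im, h1, h2] <;> ring

lemma rot_lemma (L : ℝ) (hL : 0 < L) (z w : ℂ) (hz : Complex.normSq z = L^2)
    (θ : ℝ) (hs : 0 < Real.sin θ)
    (hre : ((starRingEnd ℂ) z * w).re = -(L^2) * Real.cos θ)
    (him : 0 < ((starRingEnd ℂ) z * w).im)
    (hw : Complex.normSq w = L^2) :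
    w = ce (π - θ) * z := by
  set p := (starRingEnd ℂ) z * w with hp
  have hnp : Complex.normSq p = L^2 * L^2 := by
    rw [hp, Complex.normSq_mul, Complex.normSq_conj, hz, hw]
  have hsc := Real.sin_sq_add_cos_sq θ
  have h : L^2*L^2 = (-(L^2)*Real.cos θ)*(-(L^2)*Real.cos θ) + p.im*p.im := by
    rw [← hre, ← hnp]; exact Complex.normSq_apply p
  have him2 : p.im = L^2 * Real.sin θ := by
    have h1 : p.im^2 = (L^2 * Real.sin θ)^2 := by linear_combination -h - L^4 * hsc
    have h2 : 0 < L^2 * Real.sin θ := by positivity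
    nlinarith
  have hpe : p = (L^2 : ℝ) * ce (π - θ) := by
    apply Complex.ext
    · simp only [Complex.mul_re, Complex.ofReal_re, Complex.ofReal_im, ce_re, ce_im,
        Real.cos_pi_sub]
      rw [hre]; ring
    · simp only [Complex.mul_im, Complex.ofReal_re, Complex.ofReal_im, ce_re, ce_im,
        Real.sin_pi_sub]
      rw [him2]; ring
  have hzz : z * (starRingEnd ℂ) z = (Complex.normSq z : ℝ) := Complex.mul_conj z
  have hL2 : ((L^2 : ℝ) : ℂ) ≠ 0 := by
    simp only [ne_eq, Complex.ofReal_eq_zero]; positivity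
  have key : ((L^2:ℝ) : ℂ) * w = ((L^2:ℝ):ℂ) * (ce (π - θ) * z) := by
    calc ((L^2:ℝ) : ℂ) * w = ((Complex.normSq z : ℝ) : ℂ) * w := by rw [hz]
    _ = z * (starRingEnd ℂ) z * w := by rw [hzz]
    _ = z * p := by rw [hp]; ring
    _ = z * ((L^2 : ℝ) * ce (π - θ)) := by rw [hpe]
    _ = ((L^2:ℝ):ℂ) * (ce (π - θ) * z) := by ring
  exact mul_left_cancel₀ hL2 key

lemma conj_mul_re (a b c d : ℝ) :
    ((starRingEnd ℂ) ((a:ℂ) + (b:ℂ)*Complex.I) * ((c:ℂ) + (d:ℂ)*Complex.I)).re = a*c + b*d := by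
  simp [Complex.mul_re]

lemma conj_mul_im (a b c d : ℝ) :
    ((starRingEnd ℂ) ((a:ℂ) + (b:ℂ)*Complex.I) * ((c:ℂ) + (d:ℂ)*Complex.I)).im = a*d - b*c := by
  simp [Complex.mul_im]; ring

lemma endgame (s t D1 D2 : ℝ) (hD1 : 0 < D1) (hD1' : D1 < π/2)
    (hD2 : 0 < D2) (hD2' : D2 < π/2)
    (hs : -(π/2) < s) (hs' : s < π/2) (ht : -(π/2) < t) (ht' : t < π/2)
    (him : Real.sin (t/2) * Real.sin D1 + Real.sin (s/2) * Real.sin D2 = 0)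
    (hre : Real.sin (t/2) * Real.cos D1 + Real.sin ((t - s)/2) - Real.sin (s/2) * Real.cos D2 = 0) :
    s = 0 ∧ t = 0 := by
  have hpi := Real.pi_pos
  have sD1 : 0 < Real.sin D1 := Real.sin_pos_of_pos_of_lt_pi hD1 (by linarith)
  have sD2 : 0 < Real.sin D2 := Real.sin_pos_of_pos_of_lt_pi hD2 (by linarith)
  have cD1 : 0 < Real.cos D1 := Real.cos_pos_of_mem_Ioo ⟨by linarith, hD1'⟩
  have cD2 : 0 < Real.cos D2 := Real.cos_pos_of_mem_Ioo ⟨by linarith, hD2'⟩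
  have hs0 : s = 0 := by
    rcases lt_trichotomy s 0 with h | h | h
    · exfalso
      have hss : Real.sin (s/2) < 0 := Real.sin_neg_of_neg_of_neg_pi_lt (by linarith) (by linarith)
      have key : 0 < Real.sin (t/2) * Real.sin D1 := by nlinarith [mul_pos (neg_pos.2 hss) sD2]
      have hts : 0 < Real.sin (t/2) := by nlinarith
      have htpos : 0 < t := by
        by_contra hc
        push_neg at hc
        have : Real.sin (t/2) ≤ 0 :=
          Real.sin_nonpos_of_nonpos_of_neg_pi_le (by linarith) (by linarith)
        linarith
      have hts2 : 0 < Real.sin ((t - s)/2) :=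
        Real.sin_pos_of_pos_of_lt_pi (by linarith) (by linarith)
      nlinarith [mul_pos hts cD1, mul_pos (neg_pos.2 hss) cD2]
    · exact h
    · exfalso
      have hss : 0 < Real.sin (s/2) :=
        Real.sin_pos_of_pos_of_lt_pi (by linarith) (by linarith)
      have key : Real.sin (t/2) * Real.sin D1 < 0 := by nlinarith [mul_pos hss sD2]
      have hts : Real.sin (t/2) < 0 := by nlinarith
      have htneg : t < 0 := by
        by_contra hc
        push_neg at hc
        have : 0 ≤ Real.sin (t/2) :=
          Real.sin_nonneg_of_nonneg_of_le_pi (by linarith) (by linarith)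
        linarith
      have hts2 : Real.sin ((t - s)/2) < 0 :=
        Real.sin_neg_of_neg_of_neg_pi_lt (by linarith) (by linarith)
      nlinarith [mul_pos (neg_pos.2 hts) cD1, mul_pos hss cD2]
  subst hs0
  have h0 : Real.sin ((0:ℝ)/2) = 0 := by norm_num
  rw [h0] at him
  have htt : Real.sin (t/2) = 0 := by nlinarith
  refine ⟨rfl, ?_⟩
  rcases lt_trichotomy t 0 with h | h | h
  · exfalso
    have : Real.sin (t/2) < 0 := Real.sin_neg_of_neg_of_neg_pi_lt (by linarith) (by linarith)
    linarith
  · exact h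
  · exfalso
    have : 0 < Real.sin (t/2) := Real.sin_pos_of_pos_of_lt_pi (by linarith) (by linarith)
    linarith

lemma hex_key (x1 x2 x3 x4 x5 : ℝ)
    (h1 : x1 ∈ Set.Ioo (π/2) π) (h2 : x2 ∈ Set.Ioo (π/2) π) (h4 : x4 ∈ Set.Ioo (π/2) π)
    (h5 : x5 ∈ Set.Ioo (π/2) π)
    (hev : x1 + x3 + x5 = 2*π)
    (hS : 1 + ce (π - x1) + ce ((π - x2) + (π - x1)) + ce ((π - x3) + ((π - x2) + (π - x1)))
        + ce ((π - x4) + ((π - x3) + ((π - x2) + (π - x1))))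
        + ce ((π - x5) + ((π - x4) + ((π - x3) + ((π - x2) + (π - x1))))) = 0) :
    x4 = x1 ∧ x5 = x2 := by
  obtain ⟨h1a, h1b⟩ := h1; obtain ⟨h2a, h2b⟩ := h2
  obtain ⟨h4a, h4b⟩ := h4; obtain ⟨h5a, h5b⟩ := h5
  have hpi := Real.pi_pos
  rw [show (π - x5) + ((π - x4) + ((π - x3) + ((π - x2) + (π - x1))))
        = π + (((π - x2) + (π - x1)) + (-(x4 - x1))) by linarith,
      show (π - x4) + ((π - x3) + ((π - x2) + (π - x1)))
        = π + ((π - x1) + (x5 - x2 - (x4 - x1))) by linarith,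
      show (π - x3) + ((π - x2) + (π - x1)) = π + (x5 - x2) by linarith,
      ce_pi, ce_pi, ce_pi, ← ce_add (π - x1) (x5 - x2 - (x4 - x1)),
      ← ce_add ((π - x2) + (π - x1)) (-(x4 - x1))] at hS
  have hG : (1 - ce (x5 - x2)) + ce (π - x1) * (1 - ce (x5 - x2 - (x4 - x1)))
      + ce ((π - x2) + (π - x1)) * (1 - ce (-(x4 - x1))) = 0 := by linear_combination hS
  rw [one_sub_ce (x5 - x2), one_sub_ce (x5 - x2 - (x4 - x1)), one_sub_ce (-(x4 - x1))] at hG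
  push_cast [← Complex.ofReal_sin] at hG
  have k1 : ce ((x5 - x2)/2) * ce (x1 - π - (x5 - x2 - (x4 - x1))/2) = ce ((x1 + x4)/2 - π) := by
    rw [ce_add]; congr 1; ring
  have k2 : ce (π - x1) * ce ((x5 - x2 - (x4 - x1))/2)
      * ce (x1 - π - (x5 - x2 - (x4 - x1))/2) = 1 := by
    rw [ce_add, ce_add, show (π - x1) + (x5 - x2 - (x4 - x1))/2
      + (x1 - π - (x5 - x2 - (x4 - x1))/2) = 0 by ring, ce_zero]
  have k3 : ce ((π - x2) + (π - x1)) * ce ((-(x4 - x1))/2)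
      * ce (x1 - π - (x5 - x2 - (x4 - x1))/2) = ce (π - (x2 + x5)/2) := by
    rw [ce_add, ce_add]; congr 1; ring
  have hT : (Real.sin ((x5 - x2)/2) : ℂ) * ce ((x1 + x4)/2 - π)
      + (Real.sin ((x5 - x2 - (x4 - x1))/2) : ℂ)
      + (Real.sin ((-(x4 - x1))/2) : ℂ) * ce (π - (x2 + x5)/2) = 0 := by
    linear_combination (Complex.I/2) * ce (x1 - π - (x5 - x2 - (x4 - x1))/2) * hG
      - (Real.sin ((x5 - x2)/2) : ℂ) * k1
      - (Real.sin ((x5 - x2 - (x4 - x1))/2) : ℂ) * k2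
      - (Real.sin ((-(x4 - x1))/2) : ℂ) * k3
      + (((Real.sin ((x5 - x2)/2) : ℂ) * ce ((x5 - x2)/2)
        + (Real.sin ((x5 - x2 - (x4 - x1))/2) : ℂ) * ce (π - x1) * ce ((x5 - x2 - (x4 - x1))/2)
        + (Real.sin ((-(x4 - x1))/2) : ℂ) * ce ((π - x2) + (π - x1)) * ce ((-(x4 - x1))/2))
          * ce (x1 - π - (x5 - x2 - (x4 - x1))/2)) * Complex.I_sq
  have hIm := congrArg Complex.im hT
  have hRe := congrArg Complex.re hT
  simp only [Complex.add_im, Complex.add_re, Complex.mul_im, Complex.mul_re,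
    Complex.ofReal_re, Complex.ofReal_im, ce_re, ce_im, Complex.zero_im, Complex.zero_re,
    zero_mul, mul_zero, add_zero, zero_add] at hIm hRe
  have hsin1 : Real.sin ((x1+x4)/2 - π) = -Real.sin (π - (x1+x4)/2) := by
    rw [show (x1+x4)/2 - π = -(π - (x1+x4)/2) by ring, Real.sin_neg]
  have hcos1 : Real.cos ((x1+x4)/2 - π) = Real.cos (π - (x1+x4)/2) := by
    rw [show (x1+x4)/2 - π = -(π - (x1+x4)/2) by ring, Real.cos_neg]
  have hsins : Real.sin ((-(x4 - x1))/2) = -Real.sin ((x4-x1)/2) := by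
    rw [show (-(x4-x1))/2 = -((x4-x1)/2) by ring, Real.sin_neg]
  rw [hsin1, hsins] at hIm
  rw [hcos1, hsins] at hRe
  have him' : Real.sin ((x5 - x2)/2) * Real.sin (π - (x1+x4)/2)
      + Real.sin ((x4 - x1)/2) * Real.sin (π - (x2+x5)/2) = 0 := by linear_combination -hIm
  have hre' : Real.sin ((x5 - x2)/2) * Real.cos (π - (x1+x4)/2)
      + Real.sin (((x5 - x2) - (x4 - x1))/2)
      - Real.sin ((x4 - x1)/2) * Real.cos (π - (x2+x5)/2) = 0 := by linear_combination hRe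
  obtain ⟨hsz, htz⟩ := endgame (x4 - x1) (x5 - x2) (π - (x1+x4)/2) (π - (x2+x5)/2)
    (by linarith) (by linarith) (by linarith) (by linarith)
    (by linarith) (by linarith) (by linarith) (by linarith)
    him' hre'
  constructor <;> linarith

/-- A convex equilateral hexagon whose interior angles all lie in `(π/2, π)` and whose
odd-indexed and even-indexed interior angles each sum to `2π` is centrally symmetric.
Convexity (with positive orientation) is expressed by the positivity of the cross product
of consecutive side vectors. -/
theorem stmt_0 (v : Fin 6 → EuclideanSpace ℝ (Fin 2)) (x : Fin 6 → ℝ)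
    (hconv : ∀ i : Fin 6,
      0 < (v (i + 1) - v i) 0 * (v (i + 2) - v (i + 1)) 1
          - (v (i + 1) - v i) 1 * (v (i + 2) - v (i + 1)) 0)
    (hequi : ∀ i : Fin 6, dist (v (i + 1)) (v i) = dist (v 1) (v 0))
    (hangle : ∀ i : Fin 6, x i = ∠ (v (i - 1)) (v i) (v (i + 1)))
    (hrange : ∀ i : Fin 6, x i ∈ Set.Ioo (π / 2) π)
    (hodd : x 0 + x 2 + x 4 = 2 * π)
    (heven : x 1 + x 3 + x 5 = 2 * π) :
    ∃ c : EuclideanSpace ℝ (Fin 2), ∀ i : Fin 6, v (i + 3) = (2 : ℝ) • c - v i := by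
  have hpi := Real.pi_pos
  set L := dist (v 1) (v 0) with hLdef
  set u : Fin 6 → ℂ :=
    fun i => (((v (i+1) - v i) 0 : ℝ) : ℂ) + (((v (i+1) - v i) 1 : ℝ) : ℂ) * Complex.I with hu
  -- helper component lemmas
  have hnorm : ∀ w : EuclideanSpace ℝ (Fin 2), ‖w‖^2 = w 0 ^ 2 + w 1 ^ 2 := by
    intro w
    rw [← real_inner_self_eq_norm_sq, PiLp.inner_apply, Fin.sum_univ_two]
    simp [RCLike.inner_apply]
  have hinner : ∀ a b : EuclideanSpace ℝ (Fin 2), ⟪a, b⟫ = a 0 * b 0 + a 1 * b 1 := by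
    intro a b
    rw [PiLp.inner_apply, Fin.sum_univ_two]
    simp [RCLike.inner_apply]; ring
  -- L positive
  have hLpos : 0 < L := by
    rcases (dist_nonneg : 0 ≤ L).lt_or_eq with h | h
    · exact h
    · exfalso
      have hv : v 1 = v 0 := by rw [← dist_eq_zero]; exact h.symm
      have h0 := hconv 0
      norm_num at h0
      rw [hv, sub_self] at h0
      simp at h0
  -- side lengths
  have hside : ∀ i : Fin 6, ‖v (i+1) - v i‖ = L := by
    intro i; rw [← dist_eq_norm]; exact hequi i
  have hns : ∀ i : Fin 6, Complex.normSq (u i) = L^2 := by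
    intro i
    rw [hu]; simp only
    rw [Complex.normSq_add_mul_I, ← hnorm, hside i]
  have hu0 : u 0 ≠ 0 := by
    intro h
    have := hns 0
    rw [h] at this
    simp at this
    nlinarith
  -- rotation step
  have hstep : ∀ i : Fin 6, u (i+1) = ce (π - x (i+1)) * u i := by
    intro i
    obtain ⟨hr1, hr2⟩ := hrange (i+1)
    apply rot_lemma L hLpos (u i) (u (i+1)) (hns i) (x (i+1))
      (Real.sin_pos_of_pos_of_lt_pi (by linarith) hr2) ?_ ?_ (hns (i+1))
    · -- real part
      have ha := hangle (i+1)
      rw [add_sub_cancel_right, EuclideanGeometry.angle, vsub_eq_sub, vsub_eq_sub] at ha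
      have hcos := InnerProductGeometry.cos_angle (v i - v (i+1)) (v (i+1+1) - v (i+1))
      rw [← ha] at hcos
      have n1 : ‖v i - v (i+1)‖ = L := by
        rw [← dist_eq_norm, dist_comm]; exact hequi i
      have n2 : ‖v (i+1+1) - v (i+1)‖ = L := hside (i+1)
      rw [n1, n2, hinner] at hcos
      have hLL : (L * L : ℝ) ≠ 0 := by positivity
      rw [eq_div_iff hLL] at hcos
      rw [hu]; simp only
      rw [conj_mul_re]
      simp only [PiLp.sub_apply] at hcos ⊢
      linear_combination hcos
    · -- imaginary part
      have h := hconv i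
      rw [hu]; simp only
      rw [conj_mul_im]
      rw [show i+1+1 = i+2 by rw [add_assoc]; rfl]
      exact h
  -- instantiate
  have s0 := hstep 0
  have s1 := hstep 1
  have s2 := hstep 2
  have s3 := hstep 3
  have s4 := hstep 4
  norm_num at s0 s1 s2 s3 s4
  simp only [show (1:Fin 6)+1 = 2 from rfl, show (2:Fin 6)+1 = 3 from rfl,
    show (3:Fin 6)+1 = 4 from rfl, show (4:Fin 6)+1 = 5 from rfl] at s1 s2 s3 s4
  have c2 : u 2 = ce ((π - x 2) + (π - x 1)) * u 0 := by
    rw [s1, s0, ← mul_assoc, ce_add]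
  have c3 : u 3 = ce ((π - x 3) + ((π - x 2) + (π - x 1))) * u 0 := by
    rw [s2, c2, ← mul_assoc, ce_add]
  have c4 : u 4 = ce ((π - x 4) + ((π - x 3) + ((π - x 2) + (π - x 1)))) * u 0 := by
    rw [s3, c3, ← mul_assoc, ce_add]
  have c5 : u 5 = ce ((π - x 5) + ((π - x 4) + ((π - x 3) + ((π - x 2) + (π - x 1))))) * u 0 := by
    rw [s4, c4, ← mul_assoc, ce_add]
  -- closure
  have hsum : u 0 + u 1 + u 2 + u 3 + u 4 + u 5 = 0 := by
    rw [hu]; simp only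
    apply Complex.ext <;>
    · norm_num [Complex.add_re, Complex.add_im, Complex.mul_re, Complex.mul_im,
        Complex.I_re, Complex.I_im, Complex.ofReal_re, Complex.ofReal_im, PiLp.sub_apply]
      simp only [show (1:Fin 6)+1 = 2 from rfl, show (2:Fin 6)+1 = 3 from rfl,
        show (3:Fin 6)+1 = 4 from rfl, show (4:Fin 6)+1 = 5 from rfl, show (5:Fin 6)+1 = 0 from rfl]
      ring_nf
  have hS : 1 + ce (π - x 1) + ce ((π - x 2) + (π - x 1))
      + ce ((π - x 3) + ((π - x 2) + (π - x 1)))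
      + ce ((π - x 4) + ((π - x 3) + ((π - x 2) + (π - x 1))))
      + ce ((π - x 5) + ((π - x 4) + ((π - x 3) + ((π - x 2) + (π - x 1))))) = 0 := by
    have hfac : (1 + ce (π - x 1) + ce ((π - x 2) + (π - x 1))
        + ce ((π - x 3) + ((π - x 2) + (π - x 1)))
        + ce ((π - x 4) + ((π - x 3) + ((π - x 2) + (π - x 1))))
        + ce ((π - x 5) + ((π - x 4) + ((π - x 3) + ((π - x 2) + (π - x 1)))))) * u 0 = 0 := by
      rw [s0] at hsum
      rw [c2, c3, c4, c5] at hsum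
      linear_combination hsum
    rcases mul_eq_zero.mp hfac with h | h
    · exact h
    · exact absurd h hu0
  obtain ⟨h41, h52⟩ := hex_key (x 1) (x 2) (x 3) (x 4) (x 5)
    (hrange 1) (hrange 2) (hrange 4) (hrange 5) heven hS
  -- antipodal side relations
  have m3 : u 3 = -u 0 := by
    rw [c3, show (π - x 3) + ((π - x 2) + (π - x 1)) = π + 0 by linarith, ce_pi, ce_zero]
    ring
  have m4 : u 4 = -u 1 := by
    rw [c4, s0, show (π - x 4) + ((π - x 3) + ((π - x 2) + (π - x 1)))
      = π + (π - x 1) by linarith, ce_pi]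
    ring
  -- extract component equations
  rw [hu] at m3 m4
  simp only at m3 m4
  simp only [show (3:Fin 6)+1 = 4 from rfl, show (0:Fin 6)+1 = 1 from rfl,
    show (4:Fin 6)+1 = 5 from rfl, show (1:Fin 6)+1 = 2 from rfl] at m3 m4
  rw [Complex.ext_iff] at m3 m4
  simp only [Complex.add_re, Complex.add_im, Complex.mul_re, Complex.mul_im, Complex.neg_re,
    Complex.neg_im, Complex.I_re, Complex.I_im, Complex.ofReal_re, Complex.ofReal_im,
    mul_zero, mul_one, zero_mul, add_zero, zero_add, sub_zero, zero_sub,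
    PiLp.sub_apply] at m3 m4
  obtain ⟨m30, m31⟩ := m3
  obtain ⟨m40, m41⟩ := m4
  -- conclusion
  have key : ∀ i : Fin 6, v (i + 3) + v i = v 0 + v 3 := by
    intro i
    fin_cases i
    · show v 3 + v 0 = v 0 + v 3
      abel
    · show v 4 + v 1 = v 0 + v 3
      ext j
      fin_cases j <;>
        simp only [PiLp.add_apply, Fin.mk_zero, Fin.mk_one, Fin.isValue] <;>
        linarith [m30, m31, m40, m41]
    · show v 5 + v 2 = v 0 + v 3
      ext j
      fin_cases j <;>
        simp only [PiLp.add_apply, Fin.mk_zero, Fin.mk_one, Fin.isValue] <;>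
        linarith [m30, m31, m40, m41]
    · show v 0 + v 3 = v 0 + v 3
      rfl
    · show v 1 + v 4 = v 0 + v 3
      ext j
      fin_cases j <;>
        simp only [PiLp.add_apply, Fin.mk_zero, Fin.mk_one, Fin.isValue] <;>
        linarith [m30, m31, m40, m41]
    · show v 2 + v 5 = v 0 + v 3
      ext j
      fin_cases j <;>
        simp only [PiLp.add_apply, Fin.mk_zero, Fin.mk_one, Fin.isValue] <;>
        linarith [m30, m31, m40, m41]
  refine ⟨(2⁻¹ : ℝ) • (v 0 + v 3), ?_⟩
  have h2c : (2 : ℝ) • ((2⁻¹ : ℝ) • (v 0 + v 3)) = v 0 + v 3 := by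
    rw [smul_smul]; norm_num
  intro i
  rw [h2c, eq_sub_iff_add_eq]
  exact key i
end

section
/- Let n ≥ 2 and let v₁, …, v_{2n} : ℝ → ℝ² be differentiable curves (indices mod 2n), and let c : ℝ → ℝ² be differentiable with v_{i+n}(t) = 2c(t) − v_i(t) for all i = 1, …, n and all t. Define the side vectors e_i(t) := v_{i+1}(t) − v_i(t) and midpoints m_i(t) := (v_i(t) + v_{i+1}(t))/2. Assume that for every i and t the derivative ṁ_i(t) is parallel to e_i(t), and that for every t there exist indices i, j such that e_i(t) and e_j(t) are linearly independent. Then c is constant. -/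
/-- If the `2n` vertices of a moving polygon are centrally symmetric about a moving point
`c(t)`, each side midpoint moves parallel to its side (the carousel midpoint condition),
and at every time two side vectors are linearly independent, then the center `c` is
constant.  Here "parallel" in the plane is expressed as `¬ LinearIndependent`. -/
theorem stmt_1 (n : ℕ) (hn : 2 ≤ n)
    (v : ℝ → Fin (2 * n) → EuclideanSpace ℝ (Fin 2))
    (c : ℝ → EuclideanSpace ℝ (Fin 2))
    (hv : ∀ i : Fin (2 * n), Differentiable ℝ (fun t => v t i))
    (hc : Differentiable ℝ c)
    (hsym : ∀ t : ℝ, ∀ i : Fin (2 * n),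
      v t (i + ⟨n, by omega⟩) = (2 : ℝ) • c t - v t i)
    (hpar : ∀ t : ℝ, ∀ i : Fin (2 * n),
      ¬ LinearIndependent ℝ
        ![deriv (fun s => ((2 : ℝ)⁻¹) • (v s i + v s (i + ⟨1, by omega⟩))) t,
          v t (i + ⟨1, by omega⟩) - v t i])
    (hind : ∀ t : ℝ, ∃ i j : Fin (2 * n),
      LinearIndependent ℝ
        ![v t (i + ⟨1, by omega⟩) - v t i, v t (j + ⟨1, by omega⟩) - v t j]) :
    ∃ p : EuclideanSpace ℝ (Fin 2), ∀ t : ℝ, c t = p := by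
  have h2n : 1 < 2 * n := by omega
  have hnlt : n < 2 * n := by omega
  set one : Fin (2 * n) := ⟨1, h2n⟩ with hone
  set en : Fin (2 * n) := ⟨n, hnlt⟩ with hen
  -- midpoint and its derivative
  have hmdiff : ∀ k : Fin (2 * n),
      Differentiable ℝ (fun s => (2 : ℝ)⁻¹ • (v s k + v s (k + one))) :=
    fun k => by have := ((hv k).add (hv (k + one))).const_smul (2 : ℝ)⁻¹; exact this
  -- shift identity for midpoints
  have hshift : ∀ k : Fin (2 * n),
      (fun s => (2 : ℝ)⁻¹ • (v s (k + en) + v s ((k + en) + one)))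
      = fun s => (2 : ℝ) • c s - (2 : ℝ)⁻¹ • (v s k + v s (k + one)) := by
    intro k
    funext s
    have hco : (k + en) + one = (k + one) + en := by
      rw [add_assoc, add_assoc, add_comm en one]
    have h1 : v s (k + en) = (2 : ℝ) • c s - v s k := hsym s k
    have h2 : v s ((k + one) + en) = (2 : ℝ) • c s - v s (k + one) := hsym s (k + one)
    rw [hco, h1, h2]
    module
  -- side vector shift
  have heshift : ∀ t : ℝ, ∀ k : Fin (2 * n),
      v t ((k + en) + one) - v t (k + en) = -(v t (k + one) - v t k) := by
    intro t k
    have hco : (k + en) + one = (k + one) + en := by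
      rw [add_assoc, add_assoc, add_comm en one]
    have h1 : v t (k + en) = (2 : ℝ) • c t - v t k := hsym t k
    have h2 : v t ((k + one) + en) = (2 : ℝ) • c t - v t (k + one) := hsym t (k + one)
    rw [hco, h1, h2]
    module
  -- parallelism gives a scalar, when the side is nonzero
  have hpar' : ∀ t : ℝ, ∀ k : Fin (2 * n), (v t (k + one) - v t k) ≠ 0 →
      ∃ a : ℝ, deriv (fun s => (2 : ℝ)⁻¹ • (v s k + v s (k + one))) t
        = a • (v t (k + one) - v t k) := by
    intro t k hk
    have h := hpar t k
    rw [LinearIndependent.pair_iff] at h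
    push_neg at h
    obtain ⟨s, r, hsr, hne⟩ := h
    by_cases hs : s = 0
    · exfalso
      subst hs
      have hr : r ≠ 0 := hne rfl
      rw [zero_smul, zero_add] at hsr
      exact hk ((smul_eq_zero.mp hsr).resolve_left hr)
    · refine ⟨-(r / s), ?_⟩
      have : deriv (fun s' => (2 : ℝ)⁻¹ • (v s' k + v s' (k + one))) t
          = s⁻¹ • (s • deriv (fun s' => (2 : ℝ)⁻¹ • (v s' k + v s' (k + one))) t) := by
        rw [smul_smul, inv_mul_cancel₀ hs, one_smul]
      rw [this, eq_neg_of_add_eq_zero_left hsr]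
      rw [smul_neg, smul_smul]
      rw [← neg_smul]
      congr 1
      field_simp
  -- key: derivative of c vanishes everywhere
  have key : ∀ t : ℝ, deriv c t = 0 := by
    intro t
    obtain ⟨i, j, hij⟩ := hind t
    have hi0 : v t (i + one) - v t i ≠ 0 := by
      have := hij.ne_zero 0
      simpa using this
    have hj0 : v t (j + one) - v t j ≠ 0 := by
      have := hij.ne_zero 1
      simpa using this
    -- c derivative lies in the span of each side
    have hspan : ∀ k : Fin (2 * n), (v t (k + one) - v t k) ≠ 0 →
        ∃ b : ℝ, deriv c t = b • (v t (k + one) - v t k) := by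
      intro k hk
      obtain ⟨a, ha⟩ := hpar' t k hk
      have hk' : v t ((k + en) + one) - v t (k + en) ≠ 0 := by
        rw [heshift t k]; exact neg_ne_zero.mpr hk
      obtain ⟨a', ha'⟩ := hpar' t (k + en) hk'
      rw [heshift t k] at ha'
      rw [hshift k] at ha'
      have hd : deriv (fun s => (2 : ℝ) • c s - (2 : ℝ)⁻¹ • (v s k + v s (k + one))) t
          = (2 : ℝ) • deriv c t - deriv (fun s => (2 : ℝ)⁻¹ • (v s k + v s (k + one))) t := by
        rw [deriv_fun_sub ((hc t).fun_const_smul _) ((hmdiff k) t)]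
        rw [deriv_fun_const_smul _ (hc t)]
      rw [hd, ha] at ha'
      refine ⟨(2 : ℝ)⁻¹ * (a - a'), ?_⟩
      have h2 : (2 : ℝ) • deriv c t = (a - a') • (v t (k + one) - v t k) := by
        have := ha'
        rw [smul_neg] at this
        rw [sub_eq_iff_eq_add] at this
        rw [this]
        module
      calc deriv c t = (2 : ℝ)⁻¹ • ((2 : ℝ) • deriv c t) := by
            rw [smul_smul]; norm_num
        _ = (2 : ℝ)⁻¹ • ((a - a') • (v t (k + one) - v t k)) := by rw [h2]
        _ = ((2 : ℝ)⁻¹ * (a - a')) • (v t (k + one) - v t k) := by rw [smul_smul]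
    obtain ⟨b, hb⟩ := hspan i hi0
    obtain ⟨b', hb'⟩ := hspan j hj0
    have := (LinearIndependent.pair_iff.mp hij b (-b')) (by
      rw [neg_smul, ← hb, ← hb']
      simp)
    rw [hb, this.1, zero_smul]
  refine ⟨c 0, fun t => is_const_of_deriv_eq_zero hc key t 0⟩
end

section
/- Let ∂D denote the boundary of the triangle D = {(x, y) ∈ ℝ² : π/2 < x < π, π/2 < y < π, x + y < 3π/2}. Then max over ∂D of H(x, y) = sin x + sin y − sin(x + y) equals 1 + √2; that is, H(x, y) ≤ 1 + √2 for every (x, y) ∈ ∂D, and H(3π/4, 3π/4) = 1 + √2. -/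
open Real

lemma sin_sub_cos_le (t : ℝ) : Real.sin t - Real.cos t ≤ Real.sqrt 2 := by
  have h1 := Real.sin_sq_add_cos_sq t
  have h2 : Real.sqrt 2 ^ 2 = 2 := Real.sq_sqrt (by norm_num)
  nlinarith [sq_nonneg (Real.sin t + Real.cos t), Real.sqrt_nonneg 2,
    sq_nonneg (Real.sin t - Real.cos t - Real.sqrt 2)]

lemma one_le_sqrt_two : (1:ℝ) ≤ Real.sqrt 2 := by
  rw [show (1:ℝ) = Real.sqrt 1 by simp]
  exact Real.sqrt_le_sqrt (by norm_num)

/-- The maximum of `H(x,y) = sin x + sin y − sin(x+y)` over the boundary of the triangle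
`D = {(x,y) : π/2 < x < π, π/2 < y < π, x + y < 3π/2}` equals `1 + √2`. -/
theorem stmt_5 :
    (∀ p ∈ frontier
        {p : ℝ × ℝ | π / 2 < p.1 ∧ p.1 < π ∧ π / 2 < p.2 ∧ p.2 < π ∧ p.1 + p.2 < 3 * π / 2},
      sin p.1 + sin p.2 - sin (p.1 + p.2) ≤ 1 + Real.sqrt 2) ∧
    sin (3 * π / 4) + sin (3 * π / 4) - sin (3 * π / 4 + 3 * π / 4) = 1 + Real.sqrt 2 := by
  constructor
  · intro p hp
    set S : Set (ℝ × ℝ) :=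
      {p : ℝ × ℝ | π / 2 < p.1 ∧ p.1 < π ∧ π / 2 < p.2 ∧ p.2 < π ∧ p.1 + p.2 < 3 * π / 2}
      with hS
    have hopen : IsOpen S := by
      have h1 : IsOpen {p : ℝ × ℝ | π/2 < p.1} := isOpen_lt continuous_const continuous_fst
      have h2 : IsOpen {p : ℝ × ℝ | p.1 < π} := isOpen_lt continuous_fst continuous_const
      have h3 : IsOpen {p : ℝ × ℝ | π/2 < p.2} := isOpen_lt continuous_const continuous_snd
      have h4 : IsOpen {p : ℝ × ℝ | p.2 < π} := isOpen_lt continuous_snd continuous_const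
      have h5 : IsOpen {p : ℝ × ℝ | p.1 + p.2 < 3*π/2} :=
        isOpen_lt (continuous_fst.add continuous_snd) continuous_const
      exact h1.and (h2.and (h3.and (h4.and h5)))
    have hclos : closure S ⊆
        {p : ℝ × ℝ | π/2 ≤ p.1 ∧ p.1 ≤ π ∧ π/2 ≤ p.2 ∧ p.2 ≤ π ∧ p.1 + p.2 ≤ 3*π/2} := by
      apply closure_minimal
      · intro q hq
        exact ⟨hq.1.le, hq.2.1.le, hq.2.2.1.le, hq.2.2.2.1.le, hq.2.2.2.2.le⟩
      · have h1 : IsClosed {p : ℝ × ℝ | π/2 ≤ p.1} := isClosed_le continuous_const continuous_fst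
        have h2 : IsClosed {p : ℝ × ℝ | p.1 ≤ π} := isClosed_le continuous_fst continuous_const
        have h3 : IsClosed {p : ℝ × ℝ | π/2 ≤ p.2} := isClosed_le continuous_const continuous_snd
        have h4 : IsClosed {p : ℝ × ℝ | p.2 ≤ π} := isClosed_le continuous_snd continuous_const
        have h5 : IsClosed {p : ℝ × ℝ | p.1 + p.2 ≤ 3*π/2} :=
          isClosed_le (continuous_fst.add continuous_snd) continuous_const
        exact h1.inter (h2.inter (h3.inter (h4.inter h5)))
    have hC := hclos hp.1
    obtain ⟨hx1, hx2, hy1, hy2, hxy⟩ := hC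
    have hns : p ∉ S := by
      intro h
      exact hp.2 (by rwa [hopen.interior_eq])
    have hcases : p.1 = π/2 ∨ p.1 = π ∨ p.2 = π/2 ∨ p.2 = π ∨ p.1 + p.2 = 3*π/2 := by
      by_contra hcon
      push_neg at hcon
      obtain ⟨c1, c2, c3, c4, c5⟩ := hcon
      exact hns ⟨lt_of_le_of_ne hx1 (Ne.symm c1), lt_of_le_of_ne hx2 c2,
        lt_of_le_of_ne hy1 (Ne.symm c3), lt_of_le_of_ne hy2 c4, lt_of_le_of_ne hxy c5⟩
    rcases hcases with h | h | h | h | h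
    · -- x = π/2 : H = 1 + sin y − cos y
      rw [h, Real.sin_pi_div_two, Real.sin_add, Real.sin_pi_div_two, Real.cos_pi_div_two]
      have := sin_sub_cos_le p.2
      nlinarith [this]
    · -- x = π : H = 2 sin y
      rw [h, Real.sin_pi, Real.sin_add, Real.sin_pi, Real.cos_pi]
      have h1 := Real.sin_le_one p.2
      have h2 := one_le_sqrt_two
      nlinarith
    · -- y = π/2
      rw [h, Real.sin_pi_div_two, Real.sin_add, Real.sin_pi_div_two, Real.cos_pi_div_two]
      have := sin_sub_cos_le p.1
      nlinarith [this]
    · -- y = π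
      rw [h, Real.sin_pi, Real.sin_add, Real.sin_pi, Real.cos_pi]
      have h1 := Real.sin_le_one p.1
      have h2 := one_le_sqrt_two
      nlinarith
    · -- x + y = 3π/2
      have hy : p.2 = 3*π/2 - p.1 := by linarith
      rw [h, hy]
      have e1 : Real.sin (3*π/2) = -1 := by
        rw [show (3:ℝ)*π/2 = π + π/2 by ring, Real.sin_add, Real.sin_pi, Real.cos_pi,
          Real.sin_pi_div_two, Real.cos_pi_div_two]
        ring
      have e2 : Real.sin (3*π/2 - p.1) = -Real.cos p.1 := by
        rw [Real.sin_sub, e1, show (3:ℝ)*π/2 = π + π/2 by ring, Real.cos_add, Real.sin_pi,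
          Real.cos_pi, Real.sin_pi_div_two, Real.cos_pi_div_two]
        ring
      rw [e1, e2]
      have := sin_sub_cos_le p.1
      linarith
  · have e1 : Real.sin (3*π/4) = Real.sqrt 2 / 2 := by
      rw [show (3:ℝ)*π/4 = π - π/4 by ring, Real.sin_pi_sub, Real.sin_pi_div_four]
    have e2 : Real.sin (3*π/4 + 3*π/4) = -1 := by
      rw [show (3:ℝ)*π/4 + 3*π/4 = π + π/2 by ring, Real.sin_add, Real.sin_pi, Real.cos_pi,
        Real.sin_pi_div_two, Real.cos_pi_div_two]
      ring
    rw [e1, e2]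
    ring
end

section
/- Let x, y : ℝ → ℝ be differentiable functions satisfying ẋ = cos(x + y) − cos y and ẏ = cos x − cos(x + y), such that the curve t ↦ (x(t), y(t)) is nonconstant and periodic (there exists T > 0 with x(t + T) = x(t) and y(t + T) = y(t) for all t), and (x(t), y(t)) ∈ D for all t. Then the constant value c = sin x(0) + sin y(0) − sin(x(0) + y(0)) satisfies 1 + √2 < c < 3√3/2. -/
open Real

private lemma gderiv (u : ℝ) :
    HasDerivAt (fun u : ℝ => sin u + 2 * sin (u / 2)) (cos u + cos (u / 2)) u := by
  have h2 : HasDerivAt (fun u : ℝ => u / 2) (1 / 2) u := (hasDerivAt_id u).div_const 2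
  have h3 := ((Real.hasDerivAt_sin (u / 2)).comp u h2).const_mul 2
  have h1 := Real.hasDerivAt_sin u
  convert (show HasDerivAt (fun u : ℝ => sin u + 2 * sin (u / 2)) (cos u + 2 * (cos (u / 2) * (1 / 2))) u from h1.add h3) using 1
  ring

private lemma cos_2pi3 : cos (2 * π / 3) = -(1/2) := by
  have h : (2 * π / 3) = π - π / 3 := by ring
  rw [h, Real.cos_pi_sub, Real.cos_pi_div_three]

private lemma g_mono : StrictMonoOn (fun u : ℝ => sin u + 2 * sin (u / 2))
    (Set.Icc (π / 2) (2 * π / 3)) := by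
  have pi_pos := Real.pi_pos
  apply strictMonoOn_of_deriv_pos (convex_Icc _ _)
  · exact (Real.continuous_sin.add (continuous_const.mul (Real.continuous_sin.comp (continuous_id.div_const 2)))).continuousOn
  · intro u hu
    rw [interior_Icc] at hu
    rw [(gderiv u).deriv]
    have h1 : cos (2 * π / 3) < cos u := by
      apply Real.strictAntiOn_cos ⟨by linarith [hu.1], by linarith [hu.2]⟩
        ⟨by linarith, by linarith⟩ hu.2
    have h2 : cos (π / 3) < cos (u / 2) := by
      apply Real.strictAntiOn_cos ⟨by linarith [hu.1], by linarith [hu.2]⟩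
        ⟨by linarith, by linarith⟩ (by linarith [hu.2])
    rw [cos_2pi3] at h1
    rw [Real.cos_pi_div_three] at h2
    linarith

private lemma g_anti : StrictAntiOn (fun u : ℝ => sin u + 2 * sin (u / 2))
    (Set.Icc (2 * π / 3) π) := by
  have pi_pos := Real.pi_pos
  apply strictAntiOn_of_deriv_neg (convex_Icc _ _)
  · exact (Real.continuous_sin.add (continuous_const.mul (Real.continuous_sin.comp (continuous_id.div_const 2)))).continuousOn
  · intro u hu
    rw [interior_Icc] at hu
    rw [(gderiv u).deriv]
    have h1 : cos u < cos (2 * π / 3) := by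
      apply Real.strictAntiOn_cos ⟨by linarith, by linarith⟩
        ⟨by linarith [hu.1], by linarith [hu.2]⟩ hu.1
    have h2 : cos (u / 2) < cos (π / 3) := by
      apply Real.strictAntiOn_cos ⟨by linarith, by linarith⟩
        ⟨by linarith [hu.1], by linarith [hu.2]⟩ (by linarith [hu.1])
    rw [cos_2pi3] at h1
    rw [Real.cos_pi_div_three] at h2
    linarith

/-- If a nonconstant periodic solution of the hexagonal carousel system stays in the
triangle `D = {(x,y) : π/2 < x < π, π/2 < y < π, x + y < 3π/2}`, then the conserved value
`c = H(x(0), y(0))` satisfies `1 + √2 < c < 3√3/2`. -/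
theorem stmt_7 (x y : ℝ → ℝ) (hx : Differentiable ℝ x) (hy : Differentiable ℝ y)
    (hxode : ∀ t, deriv x t = cos (x t + y t) - cos (y t))
    (hyode : ∀ t, deriv y t = cos (x t) - cos (x t + y t))
    (hnonconst : ∃ t s : ℝ, (x t, y t) ≠ (x s, y s))
    (hper : ∃ T : ℝ, 0 < T ∧ ∀ t, x (t + T) = x t ∧ y (t + T) = y t)
    (hD : ∀ t, π / 2 < x t ∧ x t < π ∧ π / 2 < y t ∧ y t < π ∧ x t + y t < 3 * π / 2) :
    1 + Real.sqrt 2 < sin (x 0) + sin (y 0) - sin (x 0 + y 0) ∧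
    sin (x 0) + sin (y 0) - sin (x 0 + y 0) < 3 * Real.sqrt 3 / 2 := by
  have pi_pos := Real.pi_pos
  obtain ⟨T, hT, hperT⟩ := hper
  have hpx : Function.Periodic x T := fun t => (hperT t).1
  set H : ℝ → ℝ := fun t => sin (x t) + sin (y t) - sin (x t + y t) with hHdef
  -- H is conserved
  have key : ∀ t, HasDerivAt H (cos (x t) * deriv x t + cos (y t) * deriv y t
      - cos (x t + y t) * (deriv x t + deriv y t)) t := by
    intro t
    have hx' := (hx t).hasDerivAt
    have hy' := (hy t).hasDerivAt
    exact (((Real.hasDerivAt_sin (x t)).comp t hx').add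
      ((Real.hasDerivAt_sin (y t)).comp t hy')).sub
      (show HasDerivAt (fun t => sin (x t + y t)) (cos (x t + y t) * (deriv x t + deriv y t)) t from (show HasDerivAt (fun t => x t + y t) (deriv x t + deriv y t) t from hx'.add hy').sin)
  have hH0 : ∀ t, deriv H t = 0 := by
    intro t
    rw [(key t).deriv, hxode, hyode]
    ring
  have hHdiff : Differentiable ℝ H := fun t => (key t).differentiableAt
  have hconst : ∀ t s, H t = H s := fun t s => is_const_of_deriv_eq_zero hHdiff hH0 t s
  -- when deriv x = 0, we get x + 2y = 2π
  have hrel : ∀ t, deriv x t = 0 → x t + 2 * y t = 2 * π := by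
    intro t h0
    obtain ⟨hd1, hd2, hd3, hd4, hd5⟩ := hD t
    have h1 : cos (2 * π - (x t + y t)) = cos (y t) := by
      rw [Real.cos_two_pi_sub]
      have := hxode t
      linarith
    have h2 := Real.injOn_cos (show 2 * π - (x t + y t) ∈ Set.Icc 0 π from
      ⟨by linarith, by linarith⟩) (show y t ∈ Set.Icc 0 π from
      ⟨by linarith, by linarith⟩) h1
    linarith
  -- H t = g (x t) when y t = π - x t / 2
  have hg : ∀ t, y t = π - x t / 2 → H t = sin (x t) + 2 * sin (x t / 2) := by
    intro t h
    have step : H t = sin (x t) + sin (π - x t / 2) - sin (π + x t / 2) := by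
      simp only [hHdef]
      rw [h, show x t + (π - x t / 2) = π + x t / 2 from by ring]
    rw [step, Real.sin_pi_sub, Real.sin_add, Real.sin_pi, Real.cos_pi]
    ring
  -- extrema of x
  have hxc : Continuous x := hx.continuous
  obtain ⟨t₁, _, ht₁⟩ := isCompact_Icc.exists_isMaxOn (Set.nonempty_Icc.mpr hT.le)
    hxc.continuousOn
  obtain ⟨t₂, _, ht₂⟩ := isCompact_Icc.exists_isMinOn (Set.nonempty_Icc.mpr hT.le)
    hxc.continuousOn
  have hmax : ∀ t, x t ≤ x t₁ := by
    intro t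
    obtain ⟨s, hs, hst⟩ := hpx.exists_mem_Ico₀ hT t
    rw [hst]
    exact ht₁ (Set.Ico_subset_Icc_self hs)
  have hmin : ∀ t, x t₂ ≤ x t := by
    intro t
    obtain ⟨s, hs, hst⟩ := hpx.exists_mem_Ico₀ hT t
    rw [hst]
    exact ht₂ (Set.Ico_subset_Icc_self hs)
  have hd1 : deriv x t₁ = 0 :=
    IsLocalMax.deriv_eq_zero (Filter.Eventually.of_forall hmax)
  have hd2 : deriv x t₂ = 0 :=
    IsLocalMin.deriv_eq_zero (Filter.Eventually.of_forall hmin)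
  have hy1 : y t₁ = π - x t₁ / 2 := by have := hrel t₁ hd1; linarith
  have hy2 : y t₂ = π - x t₂ / 2 := by have := hrel t₂ hd2; linarith
  set a := x t₂ with ha
  set b := x t₁ with hb
  have hab : a ≤ b := hmin t₁
  have hne : a ≠ b := by
    intro h
    obtain ⟨t, s, hts⟩ := hnonconst
    apply hts
    have hx21 : x t₁ = x t₂ := h.symm
    have hxconst : ∀ u, x u = x t₁ := fun u => le_antisymm (hmax u) (hx21.trans_le (hmin u))
    have hder0 : ∀ u, deriv x u = 0 := by
      have hxe : x = fun _ => x t₁ := funext hxconst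
      intro u
      rw [hxe]
      simp
    have hyconst : ∀ u, y u = π - x t₁ / 2 := fun u => by
      have := hrel u (hder0 u)
      have hxu := hxconst u
      linarith
    rw [hxconst t, hxconst s, hyconst t, hyconst s]
  have haD := hD t₂
  have hbD := hD t₁
  have hgab : sin a + 2 * sin (a / 2) = sin b + 2 * sin (b / 2) := by
    have h1 := hg t₁ hy1
    have h2 := hg t₂ hy2
    have h3 := hconst t₂ t₁
    rw [h2, h1] at h3
    exact h3
  have h23 : a < 2 * π / 3 := by
    by_contra hcon
    push_neg at hcon
    have := g_anti ⟨hcon, haD.2.1.le⟩ ⟨le_trans hcon hab, hbD.2.1.le⟩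
      (lt_of_le_of_ne hab hne)
    simp only [] at this
    linarith
  have hc0 : sin (x 0) + sin (y 0) - sin (x 0 + y 0) = sin a + 2 * sin (a / 2) :=
    (hconst 0 t₂).trans (hg t₂ hy2)
  constructor
  · have hlow := g_mono ⟨le_refl _, by linarith⟩ ⟨haD.1.le, h23.le⟩ haD.1
    simp only [] at hlow
    rw [Real.sin_pi_div_two] at hlow
    have : π / 2 / 2 = π / 4 := by ring
    rw [this, Real.sin_pi_div_four] at hlow
    rw [hc0]
    linarith
  · have hhigh := g_mono ⟨haD.1.le, h23.le⟩ ⟨by linarith [haD.1], le_refl _⟩ h23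
    simp only [] at hhigh
    have h1 : sin (2 * π / 3) = Real.sqrt 3 / 2 := by
      have h : (2 * π / 3) = π - π / 3 := by ring
      rw [h, Real.sin_pi_sub, Real.sin_pi_div_three]
    have h2 : (2 * π / 3) / 2 = π / 3 := by ring
    rw [h1, h2, Real.sin_pi_div_three] at hhigh
    rw [hc0]
    linarith
end

section
/- Let x, y : ℝ → ℝ be differentiable functions satisfying ẋ = cos(x + y) − cos y and ẏ = cos x − cos(x + y), and let c := sin x(0) + sin y(0) − sin(x(0) + y(0)) be the conserved value of H. Set u := (x + y)/2 and v := (x − y)/2. Then for all t: u̇(t) = −sin u(t) · sin v(t), and u̇(t)² = sin² u(t) − (c + sin 2u(t))²/4. -/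
open Real

/-- One-dimensional reduction: for a solution of the hexagonal carousel system with
conserved value `c = H(x(0), y(0))`, the variable `u = (x+y)/2` satisfies
`u̇ = −sin u · sin v` (where `v = (x−y)/2`) and `u̇² = sin²u − (c + sin 2u)²/4`. -/
theorem stmt_8 (x y : ℝ → ℝ) (hx : Differentiable ℝ x) (hy : Differentiable ℝ y)
    (hxode : ∀ t, deriv x t = cos (x t + y t) - cos (y t))
    (hyode : ∀ t, deriv y t = cos (x t) - cos (x t + y t))
    (c : ℝ) (hc : c = sin (x 0) + sin (y 0) - sin (x 0 + y 0)) :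
    ∀ t : ℝ,
      deriv (fun s => (x s + y s) / 2) t
        = -(sin ((x t + y t) / 2) * sin ((x t - y t) / 2)) ∧
      (deriv (fun s => (x s + y s) / 2) t) ^ 2
        = sin ((x t + y t) / 2) ^ 2 - (c + sin (2 * ((x t + y t) / 2))) ^ 2 / 4 := by
  have hH : ∀ t, sin (x t) + sin (y t) - sin (x t + y t) = c := by
    have hf : Differentiable ℝ (fun s => sin (x s) + sin (y s) - sin (x s + y s)) := by
      fun_prop
    have hd : ∀ t, deriv (fun s => sin (x s) + sin (y s) - sin (x s + y s)) t = 0 := by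
      intro t
      have h1 : HasDerivAt x (cos (x t + y t) - cos (y t)) t := by
        rw [← hxode t]; exact (hx t).hasDerivAt
      have h2 : HasDerivAt y (cos (x t) - cos (x t + y t)) t := by
        rw [← hyode t]; exact (hy t).hasDerivAt
      have h3 : HasDerivAt (fun s => sin (x s) + sin (y s) - sin (x s + y s))
          (cos (x t) * (cos (x t + y t) - cos (y t)) +
            cos (y t) * (cos (x t) - cos (x t + y t)) -
            cos (x t + y t) * ((cos (x t + y t) - cos (y t)) + (cos (x t) - cos (x t + y t)))) t :=
        (h1.sin.add h2.sin).sub (h1.add h2).sin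
      rw [h3.deriv]; ring
    intro t
    have := is_const_of_deriv_eq_zero hf hd t 0
    simpa [hc] using this
  intro t
  have h1 : HasDerivAt x (cos (x t + y t) - cos (y t)) t := by
    rw [← hxode t]; exact (hx t).hasDerivAt
  have h2 : HasDerivAt y (cos (x t) - cos (x t + y t)) t := by
    rw [← hyode t]; exact (hy t).hasDerivAt
  have hu : HasDerivAt (fun s => (x s + y s) / 2) ((cos (x t) - cos (y t)) / 2) t := by
    have := (h1.add h2).div_const 2
    rw [show (cos (x t) - cos (y t)) / 2 = ((cos (x t + y t) - cos (y t)) + (cos (x t) - cos (x t + y t))) / 2 by ring]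
    exact this
  have hud : deriv (fun s => (x s + y s) / 2) t = (cos (x t) - cos (y t)) / 2 := hu.deriv
  have key : (cos (x t) - cos (y t)) / 2 = -(sin ((x t + y t) / 2) * sin ((x t - y t) / 2)) := by
    have := Real.cos_sub_cos (x t) (y t)
    rw [this]; ring
  refine ⟨by rw [hud, key], ?_⟩
  rw [hud, key]
  have hcv : 2 * sin ((x t + y t) / 2) * cos ((x t - y t) / 2)
      = c + sin (2 * ((x t + y t) / 2)) := by
    have hxe : x t = (x t + y t) / 2 + (x t - y t) / 2 := by ring
    have hye : y t = (x t + y t) / 2 - (x t - y t) / 2 := by ring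
    have h2u : sin (2 * ((x t + y t) / 2)) = sin (x t + y t) := by congr 1; ring
    rw [h2u, ← hH t, hxe, hye, Real.sin_add, Real.sin_sub]
    ring
  have hpyth := Real.sin_sq_add_cos_sq ((x t - y t) / 2)
  have hsq := congrArg (fun z => z ^ 2) hcv
  linear_combination sin ((x t + y t) / 2) ^ 2 * hpyth - hsq / 4
end

section
/- Let c satisfy 1 + √2 < c < 3√3/2, and let u₋ ∈ (π/2, 2π/3) and u₊ ∈ (2π/3, 3π/4) be the two solutions of F(u) = c, where F(u) = 2 sin u − sin 2u. Define Q_c(u) := sin² u − (c + sin 2u)²/4. Then π·√(3/2) < 2 ∫_{u₋}^{u₊} du / √(Q_c(u)) < 2π / √((4 − √2)/2). -/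
open Real MeasureTheory intervalIntegral


/-! ### Auxiliary lemmas for stmt_10 -/

private lemma stmt10_concave_nonneg {a b : ℝ} (hab : a ≤ b) {g g' g'' : ℝ → ℝ}
    (h1 : ∀ x, HasDerivAt g (g' x) x) (h2 : ∀ x, HasDerivAt g' (g'' x) x)
    (h3 : ∀ x ∈ Set.Ioo a b, g'' x ≤ 0) (ha : g a = 0) (hb : g b = 0) :
    ∀ x ∈ Set.Icc a b, 0 ≤ g x := by
  have hconc : ConcaveOn ℝ (Set.Icc a b) g := by
    apply concaveOn_of_hasDerivWithinAt2_nonpos (convex_Icc a b)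
    · exact (Differentiable.continuous fun x => (h1 x).differentiableAt).continuousOn
    · intro x _; exact (h1 x).hasDerivWithinAt
    · intro x _; exact (h2 x).hasDerivWithinAt
    · intro x hx; rw [interior_Icc] at hx; exact h3 x hx
  rcases eq_or_lt_of_le hab with rfl | hab'
  · intro x hx; rw [Set.mem_Icc] at hx; have : x = a := le_antisymm hx.2 hx.1
    rw [this, ha]
  intro x hx
  rw [Set.mem_Icc] at hx
  set p := (b - x) / (b - a) with hp
  set q := (x - a) / (b - a) with hq
  have hba : 0 < b - a := by linarith
  have hp0 : 0 ≤ p := div_nonneg (by linarith) hba.le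
  have hq0 : 0 ≤ q := div_nonneg (by linarith) hba.le
  have hpq : p + q = 1 := by rw [hp, hq]; field_simp; ring
  have hx' : p * a + q * b = x := by rw [hp, hq]; field_simp; ring
  have := hconc.2 (Set.left_mem_Icc.2 hab) (Set.right_mem_Icc.2 hab) hp0 hq0 hpq
  rw [smul_eq_mul, smul_eq_mul, smul_eq_mul, smul_eq_mul, ha, hb, hx'] at this
  simpa using this

private lemma stmt10_rpow_half_inv {v : ℝ} (hv : 0 ≤ v) :
    v ^ (-(1/2) : ℝ) = (Real.sqrt v)⁻¹ := by
  rw [Real.rpow_neg hv, ← Real.sqrt_eq_rpow]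

private lemma stmt10_iw_integrable {a b : ℝ} (hab : a < b) :
    IntervalIntegrable (fun u => 1 / Real.sqrt ((u - a) * (b - u))) volume a b := by
  have hr : (0:ℝ) < (b - a)/2 := by linarith
  have d1 : IntervalIntegrable (fun u : ℝ => (u - a) ^ (-(1/2) : ℝ)) volume a b := by
    have h := (intervalIntegrable_rpow' (a := 0) (b := b - a)
      (by norm_num : (-1:ℝ) < -(1/2))).comp_sub_right a
    simpa using h
  have d2 : IntervalIntegrable (fun u : ℝ => (b - u) ^ (-(1/2) : ℝ)) volume a b := by
    have h := (intervalIntegrable_rpow' (a := 0) (b := b - a)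
      (by norm_num : (-1:ℝ) < -(1/2))).comp_sub_left b
    simpa using h.symm
  have iD : IntervalIntegrable
      (fun u => (Real.sqrt ((b-a)/2))⁻¹ * ((u - a) ^ (-(1/2):ℝ) + (b - u) ^ (-(1/2):ℝ)))
      volume a b := (d1.add d2).const_mul _
  apply iD.mono_fun
  · have hcont : Continuous fun u : ℝ => Real.sqrt ((u - a) * (b - u)) := by
      apply Real.continuous_sqrt.comp; continuity
    simp only [one_div]
    exact hcont.measurable.inv.aestronglyMeasurable
  · rw [Set.uIoc_of_le hab.le]
    refine (ae_restrict_iff' measurableSet_Ioc).2 (Filter.Eventually.of_forall fun x hx => ?_)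
    obtain ⟨hx1, hx2⟩ := hx
    have hp : 0 < x - a := by linarith
    have hq : 0 ≤ b - x := by linarith
    have hLnn : 0 ≤ 1 / Real.sqrt ((x - a) * (b - x)) := by positivity
    have hRnn : 0 ≤ (Real.sqrt ((b-a)/2))⁻¹ * ((x - a) ^ (-(1/2):ℝ) + (b - x) ^ (-(1/2):ℝ)) := by
      positivity
    dsimp only
    rw [Real.norm_of_nonneg hLnn, Real.norm_of_nonneg hRnn,
      stmt10_rpow_half_inv hp.le, stmt10_rpow_half_inv hq, one_div, Real.sqrt_mul hp.le]
    rcases le_or_gt x ((a+b)/2) with hm | hm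
    · have hq' : (b - a)/2 ≤ b - x := by linarith
      have h1 : (Real.sqrt ((b-a)/2))⁻¹ * (Real.sqrt (x-a))⁻¹
          ≤ (Real.sqrt ((b-a)/2))⁻¹ * ((Real.sqrt (x-a))⁻¹ + (Real.sqrt (b-x))⁻¹) := by
        have : (0:ℝ) ≤ (Real.sqrt (b-x))⁻¹ := by positivity
        have h0 : (0:ℝ) ≤ (Real.sqrt ((b-a)/2))⁻¹ := by positivity
        nlinarith
      refine le_trans ?_ h1
      rw [mul_inv, mul_comm ((Real.sqrt ((b-a)/2))⁻¹)]
      exact mul_le_mul_of_nonneg_left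
        (inv_anti₀ (by positivity) (Real.sqrt_le_sqrt hq')) (by positivity)
    · have hp' : (b - a)/2 ≤ x - a := by linarith
      have h1 : (Real.sqrt ((b-a)/2))⁻¹ * (Real.sqrt (b-x))⁻¹
          ≤ (Real.sqrt ((b-a)/2))⁻¹ * ((Real.sqrt (x-a))⁻¹ + (Real.sqrt (b-x))⁻¹) := by
        have : (0:ℝ) ≤ (Real.sqrt (x-a))⁻¹ := by positivity
        have h0 : (0:ℝ) ≤ (Real.sqrt ((b-a)/2))⁻¹ := by positivity
        nlinarith
      refine le_trans ?_ h1
      rcases eq_or_lt_of_le hq with h0 | hq'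
      · rw [← h0]; simp
      rw [mul_inv]
      exact mul_le_mul_of_nonneg_right
        (inv_anti₀ (by positivity) (Real.sqrt_le_sqrt hp')) (by positivity)

private lemma stmt10_iw_value {a b : ℝ} (hab : a < b) :
    ∫ u in a..b, 1 / Real.sqrt ((u - a) * (b - u)) = π := by
  have hr : (0:ℝ) < (b - a)/2 := by linarith
  set r := (b - a)/2 with hrdef
  set m := (a + b)/2 with hmdef
  have hφc : Continuous fun u : ℝ => arcsin ((u - m)/r) := by
    apply Real.continuous_arcsin.comp; continuity
  have hd : ∀ x ∈ Set.Ioo a b, HasDerivWithinAt (fun u : ℝ => arcsin ((u - m)/r))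
      (1 / Real.sqrt ((x - a) * (b - x))) (Set.Ioi x) x := by
    intro x hx
    obtain ⟨hx1, hx2⟩ := hx
    have hy1 : (x - m)/r ≠ -1 := by
      have : -1 < (x - m)/r := by
        rw [lt_div_iff₀ hr]; rw [hmdef, hrdef]; linarith
      linarith
    have hy2 : (x - m)/r ≠ 1 := by
      have : (x - m)/r < 1 := by
        rw [div_lt_iff₀ hr]; rw [hmdef, hrdef]; linarith
      linarith
    have inner : HasDerivAt (fun u : ℝ => (u - m)/r) (1/r) x := by
      simpa using ((hasDerivAt_id x).sub_const m).div_const r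
    have h := (Real.hasDerivAt_arcsin hy1 hy2).comp x inner
    have hW : 0 < (x - a) * (b - x) := by
      apply mul_pos <;> linarith
    have h1 : 1 - ((x - m)/r)^2 = ((x - a) * (b - x))/r^2 := by
      field_simp
      rw [hmdef, hrdef]
      ring
    have heq : 1 / Real.sqrt (1 - ((x - m)/r)^2) * (1/r)
        = 1 / Real.sqrt ((x - a) * (b - x)) := by
      rw [h1, Real.sqrt_div hW.le, Real.sqrt_sq hr.le]
      rw [one_div_div, mul_one_div, div_div, mul_comm (Real.sqrt ((x-a)*(b-x))) r, ← div_div,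
        div_self hr.ne']
    rw [← heq]
    exact h.hasDerivWithinAt
  rw [intervalIntegral.integral_eq_sub_of_hasDeriv_right_of_le hab.le hφc.continuousOn hd
    (stmt10_iw_integrable hab)]
  have e1 : (b - m)/r = 1 := by
    rw [hmdef, hrdef]; rw [div_eq_one_iff_eq (by linarith)]; ring
  have e2 : (a - m)/r = -1 := by
    rw [hmdef, hrdef, div_eq_iff (by linarith : (b-a)/2 ≠ 0)]; ring
  rw [e1, e2, Real.arcsin_one, Real.arcsin_neg_one]
  ring

private lemma stmt10_sin2u_nonpos {u : ℝ} (h1 : π/2 ≤ u) (h2 : u ≤ 3*π/4) : sin (2*u) ≤ 0 := by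
  have hπ := Real.pi_pos
  have h : sin (2*u) = -sin (2*u - π) := by rw [Real.sin_sub_pi, neg_neg]
  have : 0 ≤ sin (2*u - π) :=
    Real.sin_nonneg_of_nonneg_of_le_pi (by linarith) (by linarith)
  linarith

private lemma stmt10_cos2u_nonpos {u : ℝ} (h1 : π/2 ≤ u) (h2 : u ≤ 3*π/4) : cos (2*u) ≤ 0 := by
  have hπ := Real.pi_pos
  exact Real.cos_nonpos_of_pi_div_two_le_of_le (by linarith) (by linarith)

/-- derivative of Q -/
private lemma stmt10_hQ' (c u : ℝ) :
    HasDerivAt (fun u => sin u ^ 2 - (c + sin (2*u))^2/4)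
      (2 * sin u * cos u - (c + sin (2*u)) * cos (2*u)) u := by
  have h2x : HasDerivAt (fun x : ℝ => 2*x) 2 u := by
    simpa using (hasDerivAt_id u).const_mul 2
  have hs2 : HasDerivAt (fun x : ℝ => sin (2*x)) (cos (2*u) * 2) u :=
    (Real.hasDerivAt_sin (2*u)).comp u h2x
  have ha := ((Real.hasDerivAt_sin u).pow 2).sub ((((hs2.const_add c)).pow 2).div_const 4)
  refine ha.congr_deriv ?_
  ring

private lemma stmt10_hQ'' (c u : ℝ) :
    HasDerivAt (fun u => 2 * sin u * cos u - (c + sin (2*u)) * cos (2*u))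
      (2*cos (2*u) - 2*cos (2*u)^2 + 2*(c + sin (2*u)) * sin (2*u)) u := by
  have h2x : HasDerivAt (fun x : ℝ => 2*x) 2 u := by
    simpa using (hasDerivAt_id u).const_mul 2
  have hs2 : HasDerivAt (fun x : ℝ => sin (2*x)) (cos (2*u) * 2) u :=
    (Real.hasDerivAt_sin (2*u)).comp u h2x
  have hc2 : HasDerivAt (fun x : ℝ => cos (2*x)) (-sin (2*u) * 2) u :=
    (Real.hasDerivAt_cos (2*u)).comp u h2x
  have ha := (((Real.hasDerivAt_sin u).const_mul 2).mul (Real.hasDerivAt_cos u)).sub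
    ((hs2.const_add c).mul hc2)
  refine ha.congr_deriv ?_
  nlinarith [Real.sin_two_mul u, Real.cos_two_mul u, Real.sin_sq_add_cos_sq u]

private lemma stmt10_hF' (u : ℝ) :
    HasDerivAt (fun u => 2 * sin u - sin (2*u)) (2 * cos u - cos (2*u) * 2) u := by
  have h2x : HasDerivAt (fun x : ℝ => 2*x) 2 u := by
    simpa using (hasDerivAt_id u).const_mul 2
  have hs2 : HasDerivAt (fun x : ℝ => sin (2*x)) (cos (2*u) * 2) u :=
    (Real.hasDerivAt_sin (2*u)).comp u h2x
  exact ((Real.hasDerivAt_sin u).const_mul 2).sub hs2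

private lemma stmt10_hF'' (u : ℝ) :
    HasDerivAt (fun u => 2 * cos u - cos (2*u) * 2) (-(2 * sin u) + sin (2*u) * 2 * 2) u := by
  have h2x : HasDerivAt (fun x : ℝ => 2*x) 2 u := by
    simpa using (hasDerivAt_id u).const_mul 2
  have hc2 : HasDerivAt (fun x : ℝ => cos (2*x)) (-sin (2*u) * 2) u :=
    (Real.hasDerivAt_cos (2*u)).comp u h2x
  have ha := ((Real.hasDerivAt_cos u).const_mul 2).sub (hc2.mul_const 2)
  refine ha.congr_deriv ?_
  ring

private lemma stmt10_hw' (um up u : ℝ) :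
    HasDerivAt (fun u => (u - um) * (up - u)) (um + up - 2*u) u := by
  have ha := (((hasDerivAt_id u).sub_const um).mul ((hasDerivAt_const u up).sub (hasDerivAt_id u)))
  refine ha.congr_deriv ?_
  simp [id_eq]
  ring

private lemma stmt10_hw'' (um up u : ℝ) :
    HasDerivAt (fun u : ℝ => um + up - 2*u) (-2) u := by
  have h2x : HasDerivAt (fun x : ℝ => 2*x) 2 u := by
    simpa using (hasDerivAt_id u).const_mul 2
  have := (hasDerivAt_const u (um + up)).sub h2x
  exact this.congr_deriv (by norm_num)


set_option maxHeartbeats 4000000 in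
/-- Two-sided estimate for the period `T(c) = 2∫_{u₋}^{u₊} du / √(Q_c(u))` of the reduced
carousel dynamics, where `Q_c(u) = sin²u − (c + sin 2u)²/4` and `u₋ < u₊` are the two
solutions of `F(u) = c`, `F(u) = 2 sin u − sin 2u`:
`π√(3/2) < T(c) < 2π/√((4−√2)/2)`. -/
theorem stmt_10 (c um up : ℝ)
    (hc1 : 1 + Real.sqrt 2 < c) (hc2 : c < 3 * Real.sqrt 3 / 2)
    (hum : um ∈ Set.Ioo (π / 2) (2 * π / 3)) (hup : up ∈ Set.Ioo (2 * π / 3) (3 * π / 4))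
    (hFum : 2 * sin um - sin (2 * um) = c) (hFup : 2 * sin up - sin (2 * up) = c) :
    π * Real.sqrt (3 / 2)
        < 2 * ∫ u in um..up, 1 / Real.sqrt (sin u ^ 2 - (c + sin (2 * u)) ^ 2 / 4) ∧
    2 * (∫ u in um..up, 1 / Real.sqrt (sin u ^ 2 - (c + sin (2 * u)) ^ 2 / 4))
        < 2 * π / Real.sqrt ((4 - Real.sqrt 2) / 2) := by
  obtain ⟨hum1, hum2⟩ := hum
  obtain ⟨hup1, hup2⟩ := hup
  have hπ := Real.pi_pos
  have hmp : um < up := hum2.trans hup1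
  have hs2sq : Real.sqrt 2 ^ 2 = 2 := Real.sq_sqrt (by norm_num)
  have hs2nn : (0:ℝ) ≤ Real.sqrt 2 := Real.sqrt_nonneg 2
  have hs2one : (1:ℝ) ≤ Real.sqrt 2 := by nlinarith
  have hrange : ∀ x ∈ Set.Ioo um up, π/2 < x ∧ x < 3*π/4 := fun x hx =>
    ⟨hum1.trans hx.1, hx.2.trans hup2⟩
  -- F ≥ c on [um, up]
  have hFge : ∀ u ∈ Set.Icc um up, c ≤ 2 * sin u - sin (2*u) := by
    have h := stmt10_concave_nonneg (a := um) (b := up) hmp.le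
      (g := fun u => 2*sin u - sin (2*u) - c)
      (g' := fun u => 2*cos u - cos (2*u)*2)
      (g'' := fun u => -(2*sin u) + sin (2*u)*2*2)
      (fun x => (stmt10_hF' x).sub_const c) (fun x => stmt10_hF'' x)
      (fun x hx => by
        obtain ⟨h1, h2⟩ := hrange x hx
        have s1 : 0 ≤ sin x := Real.sin_nonneg_of_nonneg_of_le_pi (by linarith) (by linarith)
        have s2 : sin (2*x) ≤ 0 := stmt10_sin2u_nonpos h1.le h2.le
        linarith)
      (by rw [sub_eq_zero]; exact hFum) (by rw [sub_eq_zero]; exact hFup)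
    intro u hu
    have := h u hu
    linarith
  -- Q vanishes at endpoints
  have hQum : sin um ^ 2 - (c + sin (2 * um)) ^ 2 / 4 = 0 := by
    have h : c + sin (2*um) = 2*sin um := by linarith
    rw [h]; ring
  have hQup : sin up ^ 2 - (c + sin (2 * up)) ^ 2 / 4 = 0 := by
    have h : c + sin (2*up) = 2*sin up := by linarith
    rw [h]; ring
  -- lower quadratic bound  √2·w ≤ Q
  have hQlow : ∀ u ∈ Set.Icc um up,
      Real.sqrt 2 * ((u - um) * (up - u)) ≤ sin u ^ 2 - (c + sin (2 * u)) ^ 2 / 4 := by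
    have h := stmt10_concave_nonneg (a := um) (b := up) hmp.le
      (g := fun u => sin u ^ 2 - (c + sin (2*u))^2/4 - Real.sqrt 2 * ((u - um) * (up - u)))
      (g' := fun u => 2 * sin u * cos u - (c + sin (2*u)) * cos (2*u)
        - Real.sqrt 2 * (um + up - 2*u))
      (g'' := fun u => 2*cos (2*u) - 2*cos (2*u)^2 + 2*(c + sin (2*u)) * sin (2*u)
        - Real.sqrt 2 * (-2))
      (fun x => (stmt10_hQ' c x).sub ((stmt10_hw' um up x).const_mul (Real.sqrt 2)))
      (fun x => (stmt10_hQ'' c x).sub ((stmt10_hw'' um up x).const_mul (Real.sqrt 2)))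
      (fun x hx => by
        obtain ⟨h1, h2⟩ := hrange x hx
        have hX : cos (2*x) ≤ 0 := stmt10_cos2u_nonpos h1.le h2.le
        have hX1 : -1 ≤ cos (2*x) := Real.neg_one_le_cos (2*x)
        have hT : sin (2*x) ≤ 0 := stmt10_sin2u_nonpos h1.le h2.le
        have hT1 : -1 ≤ sin (2*x) := Real.neg_one_le_sin (2*x)
        have hpy : sin (2*x)^2 + cos (2*x)^2 = 1 := Real.sin_sq_add_cos_sq (2*x)
        have hc : 1 + Real.sqrt 2 ≤ c := hc1.le
        nlinarith [mul_nonneg (neg_nonneg.2 hT) (by linarith : (0:ℝ) ≤ c - 1 - Real.sqrt 2),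
          mul_nonneg (neg_nonneg.2 hT) (by linarith : (0:ℝ) ≤ 1 + sin (2*x)),
          mul_nonneg (neg_nonneg.2 hX)
            (by nlinarith : (0:ℝ) ≤ 1 + (Real.sqrt 2 - 1) * cos (2*x))])
      (by
          have h0 : (um - um) * (up - um) = 0 := by ring
          rw [h0, hQum]; ring)
      (by
          have h0 : (up - um) * (up - up) = 0 := by ring
          rw [h0, hQup]; ring)
    intro u hu
    have := h u hu
    linarith
  -- upper quadratic bound  Q ≤ (21/8)·w
  have hQhigh : ∀ u ∈ Set.Icc um up,
      sin u ^ 2 - (c + sin (2 * u)) ^ 2 / 4 ≤ 21/8 * ((u - um) * (up - u)) := by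
    have h := stmt10_concave_nonneg (a := um) (b := up) hmp.le
      (g := fun u => 21/8 * ((u - um) * (up - u)) - (sin u ^ 2 - (c + sin (2*u))^2/4))
      (g' := fun u => 21/8 * (um + up - 2*u)
        - (2 * sin u * cos u - (c + sin (2*u)) * cos (2*u)))
      (g'' := fun u => 21/8 * (-2)
        - (2*cos (2*u) - 2*cos (2*u)^2 + 2*(c + sin (2*u)) * sin (2*u)))
      (fun x => ((stmt10_hw' um up x).const_mul (21/8 : ℝ)).sub (stmt10_hQ' c x))
      (fun x => ((stmt10_hw'' um up x).const_mul (21/8 : ℝ)).sub (stmt10_hQ'' c x))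
      (fun x hx => by
        obtain ⟨h1, h2⟩ := hrange x hx
        have hT : sin (2*x) ≤ 0 := stmt10_sin2u_nonpos h1.le h2.le
        have e1 : c + sin (2*x) ≤ 2 * sin x := by
          have := hFge x (Set.Ioo_subset_Icc_self hx)
          linarith
        have e2 : (c + sin (2*x)) * (-sin (2*x)) ≤ 2 * sin x * (-sin (2*x)) :=
          mul_le_mul_of_nonneg_right e1 (by linarith)
        have hs2x : sin (2*x) = 2 * sin x * cos x := Real.sin_two_mul x
        have hc2x : cos (2*x) = 2 * cos x ^ 2 - 1 := Real.cos_two_mul x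
        have hy1 : -1 ≤ cos x := Real.neg_one_le_cos x
        have hy2 : cos x ≤ 0 :=
          Real.cos_nonpos_of_pi_div_two_le_of_le (by linarith) (by linarith)
        have hpy : sin x ^ 2 = 1 - cos x ^ 2 := by
          nlinarith [Real.sin_sq_add_cos_sq x]
        have hpy' : sin x ^ 2 * cos x = (1 - cos x ^ 2) * cos x := by rw [hpy]
        have p2 : 4*(cos x)^4 + 4*(cos x)^3 - 6*(cos x)^2 - 4*(cos x) + 2 ≤ 21/8 := by
          nlinarith [sq_nonneg (cos x + 280/1000),
            mul_nonneg (neg_nonneg.2 hy2) (by linarith : (0:ℝ) ≤ 1 + cos x),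
            sq_nonneg (2*(cos x)+1), sq_nonneg (cos x),
            mul_nonneg (mul_nonneg (neg_nonneg.2 hy2) (by linarith : (0:ℝ) ≤ 1 + cos x))
              (sq_nonneg ((cos x)+280/1000))]
        rw [hs2x] at e2 ⊢
        rw [hc2x]
        nlinarith [e2, p2, hpy'])
      (by
          have h0 : (um - um) * (up - um) = 0 := by ring
          rw [h0, hQum]; ring)
      (by
          have h0 : (up - um) * (up - up) = 0 := by ring
          rw [h0, hQup]; ring)
    intro u hu
    have := h u hu
    linarith
  -- integral machinery
  set I := ∫ u in um..up, 1 / Real.sqrt (sin u ^ 2 - (c + sin (2 * u)) ^ 2 / 4) with hIdef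
  have iw := stmt10_iw_integrable hmp
  have iwval := stmt10_iw_value hmp
  have hwnn : ∀ u ∈ Set.Icc um up, 0 ≤ (u - um) * (up - u) := fun u hu =>
    mul_nonneg (by linarith [hu.1]) (by linarith [hu.2])
  -- integrability of 1/√Q
  have iQ : IntervalIntegrable
      (fun u => 1 / Real.sqrt (sin u ^ 2 - (c + sin (2 * u)) ^ 2 / 4)) volume um up := by
    apply iw.mono_fun
    · have hcont : Continuous fun u : ℝ => Real.sqrt (sin u ^ 2 - (c + sin (2 * u)) ^ 2 / 4) := by
        apply Real.continuous_sqrt.comp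
        continuity
      simp only [one_div]
      exact hcont.measurable.inv.aestronglyMeasurable
    · rw [Set.uIoc_of_le hmp.le]
      refine (ae_restrict_iff' measurableSet_Ioc).2 (Filter.Eventually.of_forall fun x hx => ?_)
      have hx' : x ∈ Set.Icc um up := ⟨hx.1.le, hx.2⟩
      have hLnn : 0 ≤ 1 / Real.sqrt (sin x ^ 2 - (c + sin (2 * x)) ^ 2 / 4) := by positivity
      have hRnn : 0 ≤ 1 / Real.sqrt ((x - um) * (up - x)) := by positivity
      dsimp only
      rw [Real.norm_of_nonneg hLnn, Real.norm_of_nonneg hRnn]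
      have h1 := hQlow x hx'
      have hw0 := hwnn x hx'
      have hwQ : (x - um) * (up - x) ≤ sin x ^ 2 - (c + sin (2 * x)) ^ 2 / 4 := by
        have := le_mul_of_one_le_left hw0 hs2one
        linarith
      rcases eq_or_lt_of_le hw0 with h0 | h0
      · have hxup : x = up := by
          rcases mul_eq_zero.1 h0.symm with h | h
          · exfalso; have := hx.1; linarith [sub_eq_zero.1 h]
          · linarith [sub_eq_zero.1 h]
        rw [hxup, hQup]
        simp
      · exact one_div_le_one_div_of_le (Real.sqrt_pos.2 h0) (Real.sqrt_le_sqrt hwQ)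
  -- splitting constants out of √(K·w)
  have hsplit : ∀ K : ℝ, 0 < K →
      (fun u => 1 / Real.sqrt (K * ((u - um) * (up - u))))
        = fun u => (Real.sqrt K)⁻¹ * (1 / Real.sqrt ((u - um) * (up - u))) := by
    intro K hK
    funext u
    rw [Real.sqrt_mul hK.le, one_div, mul_inv, one_div, mul_comm]
  have iKlow : IntervalIntegrable
      (fun u => 1 / Real.sqrt ((21/8 : ℝ) * ((u - um) * (up - u)))) volume um up := by
    rw [hsplit (21/8) (by norm_num)]; exact iw.const_mul _
  have valKlow : ∫ u in um..up, 1 / Real.sqrt ((21/8 : ℝ) * ((u - um) * (up - u)))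
      = (Real.sqrt (21/8))⁻¹ * π := by
    rw [hsplit (21/8) (by norm_num), intervalIntegral.integral_const_mul, iwval]
  have hs2pos : (0:ℝ) < Real.sqrt 2 := lt_of_lt_of_le one_pos hs2one
  have iKup : IntervalIntegrable
      (fun u => 1 / Real.sqrt (Real.sqrt 2 * ((u - um) * (up - u)))) volume um up := by
    rw [hsplit (Real.sqrt 2) hs2pos]; exact iw.const_mul _
  have valKup : ∫ u in um..up, 1 / Real.sqrt (Real.sqrt 2 * ((u - um) * (up - u)))
      = (Real.sqrt (Real.sqrt 2))⁻¹ * π := by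
    rw [hsplit (Real.sqrt 2) hs2pos, intervalIntegral.integral_const_mul, iwval]
  -- comparison of integrals
  have hIlow : (Real.sqrt (21/8))⁻¹ * π ≤ I := by
    rw [← valKlow, hIdef]
    apply intervalIntegral.integral_mono_on hmp.le iKlow iQ
    intro x hx
    have hw0 := hwnn x hx
    have h1 := hQlow x hx
    have h2 := hQhigh x hx
    rcases eq_or_lt_of_le hw0 with h0 | h0
    · rw [← h0, mul_zero, Real.sqrt_zero]
      simp only [div_zero]
      positivity
    · have hQpos : 0 < sin x ^ 2 - (c + sin (2 * x)) ^ 2 / 4 := by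
        have := mul_pos hs2pos h0
        linarith
      exact one_div_le_one_div_of_le (Real.sqrt_pos.2 hQpos)
        (Real.sqrt_le_sqrt (by linarith))
  have hIup : I ≤ (Real.sqrt (Real.sqrt 2))⁻¹ * π := by
    rw [← valKup, hIdef]
    apply intervalIntegral.integral_mono_on hmp.le iQ iKup
    intro x hx
    have hw0 := hwnn x hx
    have h1 := hQlow x hx
    rcases eq_or_lt_of_le hw0 with h0 | h0
    · have hx0 : x = um ∨ x = up := by
        rcases mul_eq_zero.1 h0.symm with h | h
        · left; exact sub_eq_zero.1 h
        · right; exact (sub_eq_zero.1 h).symm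
      have hQ0 : sin x ^ 2 - (c + sin (2 * x)) ^ 2 / 4 = 0 := by
        rcases hx0 with h | h
        · rw [h]; exact hQum
        · rw [h]; exact hQup
      rw [hQ0, Real.sqrt_zero]
      simp only [div_zero]
      positivity
    · have hKpos : 0 < Real.sqrt 2 * ((x - um) * (up - x)) := mul_pos hs2pos h0
      exact one_div_le_one_div_of_le (Real.sqrt_pos.2 hKpos) (Real.sqrt_le_sqrt h1)
  -- final numerics
  constructor
  · have ha : Real.sqrt (3/2) * Real.sqrt (21/8) < 2 := by
      rw [← Real.sqrt_mul (by norm_num)]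
      have h4 : (3/2 : ℝ) * (21/8) < 4 := by norm_num
      calc Real.sqrt (3/2 * (21/8)) < Real.sqrt 4 := Real.sqrt_lt_sqrt (by positivity) h4
        _ = 2 := by
          rw [show (4:ℝ) = 2^2 by norm_num, Real.sqrt_sq (by norm_num : (0:ℝ) ≤ 2)]
    have hsl : 0 < Real.sqrt (21/8) := Real.sqrt_pos.2 (by norm_num)
    have h2I : 2 * ((Real.sqrt (21/8))⁻¹ * π) ≤ 2 * I := by linarith
    refine lt_of_lt_of_le ?_ h2I
    rw [show 2 * ((Real.sqrt (21/8))⁻¹ * π) = 2 * π / Real.sqrt (21/8) by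
      field_simp]
    rw [lt_div_iff₀ hsl]
    nlinarith [ha, hπ, Real.sqrt_nonneg (3/2 : ℝ), Real.sqrt_nonneg (21/8 : ℝ)]
  · have h42 : Real.sqrt 2 < 2 := by nlinarith
    have hbpos : (0:ℝ) < (4 - Real.sqrt 2)/2 := by linarith
    have hblt : (4 - Real.sqrt 2)/2 < Real.sqrt 2 := by nlinarith
    have hlt : Real.sqrt ((4 - Real.sqrt 2)/2) < Real.sqrt (Real.sqrt 2) :=
      Real.sqrt_lt_sqrt hbpos.le hblt
    have hpos : 0 < Real.sqrt ((4 - Real.sqrt 2)/2) := Real.sqrt_pos.2 hbpos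
    have h1 : 2 * I ≤ 2 * ((Real.sqrt (Real.sqrt 2))⁻¹ * π) := by linarith
    refine lt_of_le_of_lt h1 ?_
    rw [show 2 * ((Real.sqrt (Real.sqrt 2))⁻¹ * π) = 2 * π / Real.sqrt (Real.sqrt 2) by
      field_simp]
    exact div_lt_div_of_pos_left (by positivity) hpos hlt
end

section
/- Let c satisfy 1 + √2 < c < 3√3/2, and let u₋ ∈ (π/2, 2π/3) and u₊ ∈ (2π/3, 3π/4) be the two solutions of F(u) = c, where F(u) = 2 sin u − sin 2u. Define Q_c(u) := sin² u − (c + sin 2u)²/4. Then Q_c(u) ≤ (8/3)·(u − u₋)·(u₊ − u) for all u ∈ [u₋, u₊]. -/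
open Real

private lemma hasDerivAt_sin2 (u : ℝ) :
    HasDerivAt (fun x : ℝ => Real.sin (2 * x)) (2 * Real.cos (2 * u)) u := by
  have h := (Real.hasDerivAt_sin (2 * u)).comp u ((hasDerivAt_id u).const_mul 2)
  refine h.congr_deriv ?_
  ring

private lemma hasDerivAt_cos2 (u : ℝ) :
    HasDerivAt (fun x : ℝ => Real.cos (2 * x)) (-2 * Real.sin (2 * u)) u := by
  have h := (Real.hasDerivAt_cos (2 * u)).comp u ((hasDerivAt_id u).const_mul 2)
  refine h.congr_deriv ?_
  ring

/-- Upper parabolic bound for `Q_c(u) = sin²u − (c + sin 2u)²/4` between the turning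
points `u₋ < u₊` (the two solutions of `F(u) = c`, `F(u) = 2 sin u − sin 2u`):
`Q_c(u) ≤ (8/3)(u − u₋)(u₊ − u)` on `[u₋, u₊]`. -/
theorem stmt_14 (c um up : ℝ)
    (hc1 : 1 + Real.sqrt 2 < c) (hc2 : c < 3 * Real.sqrt 3 / 2)
    (hum : um ∈ Set.Ioo (π / 2) (2 * π / 3)) (hup : up ∈ Set.Ioo (2 * π / 3) (3 * π / 4))
    (hFum : 2 * sin um - sin (2 * um) = c) (hFup : 2 * sin up - sin (2 * up) = c) :
    ∀ u ∈ Set.Icc um up,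
      sin u ^ 2 - (c + sin (2 * u)) ^ 2 / 4 ≤ 8 / 3 * (u - um) * (up - u) := by
  obtain ⟨hum1, hum2⟩ := hum
  obtain ⟨hup1, hup2⟩ := hup
  have hpi := Real.pi_pos
  have hord : um ≤ up := by linarith
  -- sign facts on the interval
  have signs : ∀ u ∈ Set.Icc um up,
      0 < Real.sin u ∧ Real.cos u ≤ 0 ∧ Real.sin (2 * u) < 0 := by
    intro u hu
    obtain ⟨h1, h2⟩ := hu
    have hu1 : π / 2 < u := lt_of_lt_of_le hum1 h1
    have hu2 : u < 3 * π / 4 := lt_of_le_of_lt h2 hup2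
    refine ⟨Real.sin_pos_of_pos_of_lt_pi (by linarith) (by linarith),
      Real.cos_nonpos_of_pi_div_two_le_of_le (by linarith) (by linarith), ?_⟩
    have h3 : 0 < Real.sin (2 * u - π) :=
      Real.sin_pos_of_pos_of_lt_pi (by linarith) (by linarith)
    rw [Real.sin_sub_pi] at h3
    linarith
  -- Step A : F(u) := 2 sin u - sin 2u is concave on [um, up], hence F ≥ c there
  have hFd : ∀ u : ℝ, HasDerivAt (fun x => 2 * Real.sin x - Real.sin (2 * x))
      (2 * Real.cos u - 2 * Real.cos (2 * u)) u := by
    intro u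
    exact ((Real.hasDerivAt_sin u).const_mul 2).sub (hasDerivAt_sin2 u)
  have hFd2 : ∀ u : ℝ, HasDerivAt (fun x => 2 * Real.cos x - 2 * Real.cos (2 * x))
      (-2 * Real.sin u - 2 * (-2 * Real.sin (2 * u))) u := by
    intro u
    have h := ((Real.hasDerivAt_cos u).const_mul 2).sub ((hasDerivAt_cos2 u).const_mul 2)
    refine h.congr_deriv ?_
    ring
  have hFconc : ConcaveOn ℝ (Set.Icc um up) (fun x => 2 * Real.sin x - Real.sin (2 * x)) := by
    apply concaveOn_of_hasDerivWithinAt2_nonpos (convex_Icc um up)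
      (Differentiable.continuous (fun x => (hFd x).differentiableAt)).continuousOn
      (fun x _ => (hFd x).hasDerivWithinAt) (fun x _ => (hFd2 x).hasDerivWithinAt)
    intro x hx
    rw [interior_Icc] at hx
    obtain ⟨hs, hx0, hS⟩ := signs x (Set.Ioo_subset_Icc_self hx)
    nlinarith
  have hcle : ∀ u ∈ Set.Icc um up, c ≤ 2 * Real.sin u - Real.sin (2 * u) := by
    intro u hu
    have hseg : u ∈ segment ℝ um up := by rwa [segment_eq_Icc hord]
    have h := hFconc.ge_on_segment (Set.left_mem_Icc.2 hord) (Set.right_mem_Icc.2 hord) hseg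
    rw [hFum, hFup, min_self] at h
    exact h
  -- Step B : g(u) := Q_c(u) - (8/3)(u-um)(up-u) is convex on [um, up]
  set g : ℝ → ℝ :=
    fun u => Real.sin u ^ 2 - (c + Real.sin (2 * u)) ^ 2 / 4 - 8 / 3 * (u - um) * (up - u)
    with hgdef
  have hgd : ∀ u : ℝ, HasDerivAt g
      (2 * Real.sin u * Real.cos u - (c + Real.sin (2 * u)) * Real.cos (2 * u)
        - 8 / 3 * (um + up - 2 * u)) u := by
    intro u
    have h1 : HasDerivAt (fun x : ℝ => Real.sin x ^ 2)
        (2 * Real.sin u ^ 1 * Real.cos u) u := (Real.hasDerivAt_sin u).pow 2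
    have h2 : HasDerivAt (fun x : ℝ => (c + Real.sin (2 * x)) ^ 2 / 4)
        (2 * (c + Real.sin (2 * u)) ^ 1 * (2 * Real.cos (2 * u)) / 4) u :=
      (((hasDerivAt_sin2 u).const_add c).pow 2).div_const 4
    have h3 : HasDerivAt (fun x : ℝ => 8 / 3 * (x - um) * (up - x))
        (8 / 3 * 1 * (up - u) + 8 / 3 * (u - um) * (0 - 1)) u :=
      (((hasDerivAt_id u).sub_const um).const_mul (8 / 3)).mul
        ((hasDerivAt_const u up).sub (hasDerivAt_id u))
    have h := (h1.sub h2).sub h3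
    refine h.congr_deriv ?_
    ring
  have hgd2 : ∀ u : ℝ, HasDerivAt
      (fun u => 2 * Real.sin u * Real.cos u - (c + Real.sin (2 * u)) * Real.cos (2 * u)
        - 8 / 3 * (um + up - 2 * u))
      (2 * (Real.cos u ^ 2 - Real.sin u ^ 2)
        - (2 * Real.cos (2 * u) ^ 2 - 2 * (c + Real.sin (2 * u)) * Real.sin (2 * u))
        + 16 / 3) u := by
    intro u
    have h1 : HasDerivAt (fun x : ℝ => 2 * Real.sin x * Real.cos x)
        (2 * (Real.cos u * Real.cos u + Real.sin u * -Real.sin u)) u := by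
      have := ((Real.hasDerivAt_sin u).mul (Real.hasDerivAt_cos u)).const_mul 2
      rw [show (fun x : ℝ => 2 * Real.sin x * Real.cos x) = fun x => 2 * (Real.sin x * Real.cos x)
        from funext fun x => mul_assoc _ _ _]
      refine this.congr_deriv ?_
      ring
    have h2 : HasDerivAt (fun x : ℝ => (c + Real.sin (2 * x)) * Real.cos (2 * x))
        (2 * Real.cos (2 * u) * Real.cos (2 * u)
          + (c + Real.sin (2 * u)) * (-2 * Real.sin (2 * u))) u :=
      ((hasDerivAt_sin2 u).const_add c).mul (hasDerivAt_cos2 u)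
    have h3 : HasDerivAt (fun x : ℝ => 8 / 3 * (um + up - 2 * x)) (8 / 3 * (0 - 2)) u := by
      have := (((hasDerivAt_id u).const_mul 2).const_sub (um + up)).const_mul (8 / 3)
      refine this.congr_deriv ?_
      ring
    have h := (h1.sub h2).sub h3
    refine h.congr_deriv ?_
    ring
  have hgconv : ConvexOn ℝ (Set.Icc um up) g := by
    apply convexOn_of_hasDerivWithinAt2_nonneg (convex_Icc um up)
      (Differentiable.continuous (fun x => (hgd x).differentiableAt)).continuousOn
      (fun x _ => (hgd x).hasDerivWithinAt) (fun x _ => (hgd2 x).hasDerivWithinAt)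
    intro x hx
    rw [interior_Icc] at hx
    obtain ⟨hs, hx0, hS⟩ := signs x (Set.Ioo_subset_Icc_self hx)
    have hcF : c ≤ 2 * Real.sin x - Real.sin (2 * x) := hcle x (Set.Ioo_subset_Icc_self hx)
    have key : 2 * Real.sin x * Real.sin (2 * x) ≤ (c + Real.sin (2 * x)) * Real.sin (2 * x) :=
      mul_le_mul_of_nonpos_right (by linarith) hS.le
    have hsin2 : Real.sin (2 * x) = 2 * Real.sin x * Real.cos x := Real.sin_two_mul x
    have hcos2 : Real.cos (2 * x) = 2 * Real.cos x ^ 2 - 1 := Real.cos_two_mul x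
    have hpyth : Real.sin x ^ 2 + Real.cos x ^ 2 = 1 := Real.sin_sq_add_cos_sq x
    have hx1 : -1 ≤ Real.cos x := Real.neg_one_le_cos x
    have hpoly : 0 ≤ -4 * Real.cos x ^ 4 - 4 * Real.cos x ^ 3 + 6 * Real.cos x ^ 2
        + 4 * Real.cos x + 2 / 3 := by
      nlinarith [sq_nonneg (Real.cos x + 1), sq_nonneg (Real.cos x), sq_nonneg (2 * Real.cos x + 1),
        sq_nonneg (Real.cos x ^ 2 + Real.cos x),
        mul_nonneg (neg_nonneg.2 hx0) (by linarith : (0:ℝ) ≤ Real.cos x + 1),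
        sq_nonneg (Real.cos x + 1 / 4)]
    nlinarith [key, hpoly, hpyth, hsin2, hcos2]
  -- conclusion
  intro u hu
  have hseg : u ∈ segment ℝ um up := by rwa [segment_eq_Icc hord]
  have hmax := hgconv.le_on_segment (Set.left_mem_Icc.2 hord) (Set.right_mem_Icc.2 hord) hseg
  have hgum : g um = 0 := by
    have h : c + Real.sin (2 * um) = 2 * Real.sin um := by linarith
    simp only [hgdef]
    rw [h]
    ring
  have hgup : g up = 0 := by
    have h : c + Real.sin (2 * up) = 2 * Real.sin up := by linarith
    simp only [hgdef]
    rw [h]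
    ring
  rw [hgum, hgup, max_self] at hmax
  simp only [hgdef] at hmax
  linarith
end

section
/- Let c satisfy 1 + √2 < c < 3√3/2, and let u₋ ∈ (π/2, 2π/3) and u₊ ∈ (2π/3, 3π/4) be the two solutions of F(u) = c, where F(u) = 2 sin u − sin 2u. Define Q_c(u) := sin² u − (c + sin 2u)²/4. Then Q_c(u) ≥ ((4 − √2)/2)·(u − u₋)·(u₊ − u) for all u ∈ [u₋, u₊]. -/
open Real

private lemma sqrt2_gt : (1.414:ℝ) < Real.sqrt 2 := by
  have h := Real.sq_sqrt (by norm_num : (2:ℝ) ≥ 0)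
  have h0 := Real.sqrt_nonneg 2
  nlinarith

private lemma sqrt2_lt : Real.sqrt 2 < (1.415:ℝ) := by
  have h := Real.sq_sqrt (by norm_num : (2:ℝ) ≥ 0)
  have h0 := Real.sqrt_nonneg 2
  nlinarith

/-- The quartic lower bound for `|F''| = 2 sin u (1 - 4 cos u)`. -/
private lemma quartic_bound (x s : ℝ) (h1 : -(71/100) ≤ x) (h2 : x ≤ -(6/25))
    (hs : s^2 = 1 - x^2) (hsp : 0 < s) : 19/5 ≤ 2*s*(1-4*x) := by
  have key : (2*s*(1-4*x))^2 ≥ (19/5)^2 := by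
    nlinarith [mul_nonneg (by linarith : (0:ℝ) ≤ x + 71/100)
      (by linarith : (0:ℝ) ≤ -(6/25) - x), sq_nonneg (x+1/2), sq_nonneg s]
  nlinarith [mul_pos hsp (by nlinarith : (0:ℝ) < 1 - 4*x)]

/-- Second-derivative computation helper: `F(w) - c - (19/10)(w-um)(up-w)`. -/
private lemma hasDerivAt_g (c um up v : ℝ) :
    HasDerivAt (fun w => 2*Real.sin w - Real.sin (2*w) - c - 19/10*((w-um)*(up-w)))
      (2*Real.cos v - 2*Real.cos (2*v) - 19/10*(up + um - 2*v)) v := by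
  have A : HasDerivAt (fun w : ℝ => Real.sin (2*w)) (Real.cos (2*v) * 2) v := by
    have := (Real.hasDerivAt_sin (2*v)).comp v ((hasDerivAt_id v).const_mul 2)
    simpa [Function.comp_def] using this
  have B : HasDerivAt (fun w : ℝ => 19/10*((w-um)*(up-w)))
      (19/10*(1*(up-v) + (v-um)*(-1))) v :=
    (((hasDerivAt_id v).sub_const um).mul ((hasDerivAt_id v).const_sub up)).const_mul _
  have := (((Real.hasDerivAt_sin v).const_mul 2).sub A).sub_const c |>.sub B
  refine this.congr_deriv ?_
  ring

private lemma hasDerivAt_g' (um up v : ℝ) :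
    HasDerivAt (fun w => 2*Real.cos w - 2*Real.cos (2*w) - 19/10*(up + um - 2*w))
      (-2*Real.sin v + 4*Real.sin (2*v) + 19/5) v := by
  have A : HasDerivAt (fun w : ℝ => Real.cos (2*w)) (-Real.sin (2*v) * 2) v := by
    have := (Real.hasDerivAt_cos (2*v)).comp v ((hasDerivAt_id v).const_mul 2)
    simpa [Function.comp_def] using this
  have B : HasDerivAt (fun w : ℝ => 19/10*(up + um - 2*w)) (19/10*(-(2:ℝ))) v := by
    have h : HasDerivAt (fun w : ℝ => up + um - 2*w) (-(2:ℝ)) v := by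
      have := ((hasDerivAt_id v).const_mul 2).const_sub (up + um)
      simpa using this
    exact h.const_mul _
  have := (((Real.hasDerivAt_cos v).const_mul 2).sub (A.const_mul 2)).sub B
  refine this.congr_deriv ?_
  ring

set_option maxHeartbeats 1000000 in
/-- Lower parabolic bound for `Q_c(u) = sin²u − (c + sin 2u)²/4` between the turning
points `u₋ < u₊` (the two solutions of `F(u) = c`, `F(u) = 2 sin u − sin 2u`):
`Q_c(u) ≥ ((4−√2)/2)(u − u₋)(u₊ − u)` on `[u₋, u₊]`. -/
theorem stmt_15 (c um up : ℝ)
    (hc1 : 1 + Real.sqrt 2 < c) (hc2 : c < 3 * Real.sqrt 3 / 2)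
    (hum : um ∈ Set.Ioo (π / 2) (2 * π / 3)) (hup : up ∈ Set.Ioo (2 * π / 3) (3 * π / 4))
    (hFum : 2 * sin um - sin (2 * um) = c) (hFup : 2 * sin up - sin (2 * up) = c) :
    ∀ u ∈ Set.Icc um up,
      (4 - Real.sqrt 2) / 2 * (u - um) * (up - u)
        ≤ sin u ^ 2 - (c + sin (2 * u)) ^ 2 / 4 := by
  have hpi := Real.pi_pos
  obtain ⟨hum1, hum2⟩ := hum
  obtain ⟨hup1, hup2⟩ := hup
  have hmltp : um < up := by linarith
  have hs2g := sqrt2_gt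
  have hs2l := sqrt2_lt
  -- cos um ≤ -6/25
  have hcosum : Real.cos um ≤ -(6/25) := by
    by_contra h
    push_neg at h
    have hx0 : Real.cos um ≤ 0 :=
      Real.cos_nonpos_of_pi_div_two_le_of_le (le_of_lt hum1) (by linarith)
    have hsp : 0 < Real.sin um := Real.sin_pos_of_pos_of_lt_pi (by linarith) (by linarith)
    have hs : Real.sin um ^ 2 = 1 - Real.cos um ^ 2 := by
      have := Real.sin_sq_add_cos_sq um; linarith
    have hc : 2 * Real.sin um * (1 - Real.cos um) = c := by
      rw [← hFum, Real.sin_two_mul]; ring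
    have hcp : (0:ℝ) < c := by nlinarith
    nlinarith [mul_nonneg (by linarith : (0:ℝ) ≤ Real.cos um + 6/25) (sq_nonneg (1 - Real.cos um)),
      mul_pos hcp hcp]
  -- bounds valid on all of [um, up]
  have hub : ∀ u ∈ Set.Icc um up, Real.sqrt 2 / 2 ≤ Real.sin u ∧
      Real.cos u ≤ -(6/25) ∧ -(Real.sqrt 2 / 2) ≤ Real.cos u := by
    intro u hu
    obtain ⟨hu1, hu2⟩ := hu
    have hu3 : π/2 < u := by linarith
    have hu4 : u < 3*π/4 := by linarith
    refine ⟨?_, ?_, ?_⟩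
    · have := Real.cos_le_cos_of_nonneg_of_le_pi (by linarith : (0:ℝ) ≤ u - π/2)
        (by linarith : π/4 ≤ π) (by linarith : u - π/2 ≤ π/4)
      rwa [Real.cos_sub_pi_div_two, Real.cos_pi_div_four] at this
    · have := Real.cos_le_cos_of_nonneg_of_le_pi (by linarith : (0:ℝ) ≤ um)
        (by linarith : u ≤ π) hu1
      linarith
    · have := Real.cos_le_cos_of_nonneg_of_le_pi (by linarith : (0:ℝ) ≤ u)
        (by linarith : 3*π/4 ≤ π) (le_of_lt hu4)
      have h34 : Real.cos (3*π/4) = -(Real.sqrt 2 / 2) := by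
        have : (3*π/4 : ℝ) = π - π/4 := by ring
        rw [this, Real.cos_pi_sub, Real.cos_pi_div_four]
      linarith [h34 ▸ this]
  -- concavity of g
  set g : ℝ → ℝ := fun w => 2*Real.sin w - Real.sin (2*w) - c - 19/10*((w-um)*(up-w)) with hg
  have hconc : ConcaveOn ℝ (Set.Icc um up) g := by
    apply concaveOn_of_hasDerivWithinAt2_nonpos (convex_Icc um up)
      (f' := fun v => 2*Real.cos v - 2*Real.cos (2*v) - 19/10*(up + um - 2*v))
      (f'' := fun v => -2*Real.sin v + 4*Real.sin (2*v) + 19/5)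
    · exact (Continuous.continuousOn (by fun_prop))
    · intro x _; exact (hasDerivAt_g c um up x).hasDerivWithinAt
    · intro x _; exact (hasDerivAt_g' um up x).hasDerivWithinAt
    · intro x hx
      rw [interior_Icc] at hx
      obtain ⟨hsl, hcu, hcl⟩ := hub x (Set.mem_Icc.mpr ⟨le_of_lt hx.1, le_of_lt hx.2⟩)
      have hsp : 0 < Real.sin x := by nlinarith
      have hs : Real.sin x ^ 2 = 1 - Real.cos x ^ 2 := by
        have := Real.sin_sq_add_cos_sq x; linarith
      have hq := quartic_bound (Real.cos x) (Real.sin x)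
        (by nlinarith) hcu hs hsp
      have h2x : Real.sin (2*x) = 2 * Real.sin x * Real.cos x := Real.sin_two_mul x
      nlinarith
  -- g ≥ 0 on [um, up]
  intro u hu
  have hgum : g um = 0 := by simp only [hg]; rw [hFum]; ring
  have hgup : g up = 0 := by simp only [hg]; rw [hFup]; ring
  have hseg : u ∈ segment ℝ um up := by
    rw [segment_eq_Icc (le_of_lt hmltp)]; exact hu
  have hglb := hconc.ge_on_segment (Set.left_mem_Icc.mpr (le_of_lt hmltp))
    (Set.right_mem_Icc.mpr (le_of_lt hmltp)) hseg
  rw [hgum, hgup, min_self] at hglb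
  -- assemble
  obtain ⟨hsl, hcu, hcl⟩ := hub u hu
  have hD : 0 ≤ (u - um) * (up - u) := mul_nonneg (by linarith [hu.1]) (by linarith [hu.2])
  have hA : 19/10 * ((u - um) * (up - u)) ≤ 2*Real.sin u - Real.sin (2*u) - c := by
    have : g u = 2*Real.sin u - Real.sin (2*u) - c - 19/10*((u-um)*(up-u)) := rfl
    linarith [hglb, this ▸ hglb]
  have h2u : Real.sin (2*u) = 2 * Real.sin u * Real.cos u := Real.sin_two_mul u
  have hB : 2*Real.sqrt 2 ≤ 2*Real.sin u + Real.sin (2*u) + c := by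
    have h1 : Real.sqrt 2 / 2 * (1 - Real.sqrt 2/2) ≤ Real.sin u * (1 + Real.cos u) := by
      apply mul_le_mul hsl (by linarith) (by nlinarith) (by nlinarith [Real.sin_le_one u])
    have hsq : Real.sqrt 2 ^ 2 = 2 := Real.sq_sqrt (by norm_num)
    nlinarith
  -- final inequality
  have hfact : Real.sin u ^ 2 - (c + Real.sin (2*u))^2/4 =
      (2*Real.sin u - Real.sin (2*u) - c) * (2*Real.sin u + Real.sin (2*u) + c) / 4 := by ring
  rw [hfact]
  have hAnn : 0 ≤ 2*Real.sin u - Real.sin (2*u) - c := le_trans (by positivity) hA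
  have hBnn : 0 ≤ 2*Real.sin u + Real.sin (2*u) + c := by nlinarith
  have step1 : (19/10 * ((u - um) * (up - u))) * (2*Real.sin u + Real.sin (2*u) + c)
      ≤ (2*Real.sin u - Real.sin (2*u) - c) * (2*Real.sin u + Real.sin (2*u) + c) :=
    mul_le_mul_of_nonneg_right hA hBnn
  have step2 : (19/10 * ((u - um) * (up - u))) * (2*Real.sqrt 2)
      ≤ (19/10 * ((u - um) * (up - u))) * (2*Real.sin u + Real.sin (2*u) + c) :=
    mul_le_mul_of_nonneg_left hB (by positivity)
  nlinarith [mul_nonneg hD (by linarith : (0:ℝ) ≤ Real.sqrt 2 - 1.414)]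
end

section
/- Let v₁, …, v₆ ∈ ℝ² (in cyclic order) be the vertices of a convex equilateral hexagon with side length 2 that is centrally symmetric about a point O (i.e. v_{i+3} = 2O − v_i, indices mod 6). Let x ∈ (π/2, π) be the interior angle at v₁ and y ∈ (π/2, π) the interior angle at v₂. Then the distance r = |v₃ − O| satisfies r² = 3 − 2 cos x − 2 cos y + 2 cos(x + y). -/
open Real EuclideanGeometry

set_option maxHeartbeats 2000000 in
/-- For a convex equilateral hexagon of side length `2`, centrally symmetric about `O`,
with interior angle `x` at `v₁` and `y` at `v₂`, the distance `r` from `O` to the vertex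
`v₃` satisfies `r² = 3 − 2 cos x − 2 cos y + 2 cos(x+y)`.  Convexity (with positive
orientation) is expressed by the positivity of the cross product of consecutive side
vectors. -/
theorem stmt_18 (v : Fin 6 → EuclideanSpace ℝ (Fin 2)) (O : EuclideanSpace ℝ (Fin 2))
    (x y : ℝ)
    (hconv : ∀ i : Fin 6,
      0 < (v (i + 1) - v i) 0 * (v (i + 2) - v (i + 1)) 1
          - (v (i + 1) - v i) 1 * (v (i + 2) - v (i + 1)) 0)
    (hequi : ∀ i : Fin 6, dist (v (i + 1)) (v i) = 2)
    (hsym : ∀ i : Fin 6, v (i + 3) = (2 : ℝ) • O - v i)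
    (hx : x = ∠ (v 5) (v 0) (v 1)) (hy : y = ∠ (v 0) (v 1) (v 2))
    (hxr : x ∈ Set.Ioo (π / 2) π) (hyr : y ∈ Set.Ioo (π / 2) π) :
    dist (v 2) O ^ 2 = 3 - 2 * cos x - 2 * cos y + 2 * cos (x + y) := by
  have key : ∀ (p q : EuclideanSpace ℝ (Fin 2)),
      dist p q ^ 2 = (p 0 - q 0) ^ 2 + (p 1 - q 1) ^ 2 := by
    intro p q
    rw [EuclideanSpace.dist_eq, Real.sq_sqrt (by positivity)]
    simp [Fin.sum_univ_two, Real.dist_eq, sq_abs]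
  have inner_eq : ∀ (p q : EuclideanSpace ℝ (Fin 2)),
      (inner ℝ p q : ℝ) = p 0 * q 0 + p 1 * q 1 := by
    intro p q
    simp [PiLp.inner_apply, Fin.sum_univ_two, RCLike.inner_apply, mul_comm]
  -- side vector components, as opaque real variables
  obtain ⟨a0, ha0⟩ : ∃ t : ℝ, v 1 0 - v 0 0 = t := ⟨_, rfl⟩
  obtain ⟨a1, ha1⟩ : ∃ t : ℝ, v 1 1 - v 0 1 = t := ⟨_, rfl⟩
  obtain ⟨b0, hb0⟩ : ∃ t : ℝ, v 2 0 - v 1 0 = t := ⟨_, rfl⟩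
  obtain ⟨b1, hb1⟩ : ∃ t : ℝ, v 2 1 - v 1 1 = t := ⟨_, rfl⟩
  obtain ⟨c0, hc0⟩ : ∃ t : ℝ, v 0 0 - v 5 0 = t := ⟨_, rfl⟩
  obtain ⟨c1, hc1⟩ : ∃ t : ℝ, v 0 1 - v 5 1 = t := ⟨_, rfl⟩
  -- components of difference vectors
  have ea0 : (v 1 - v 0) 0 = a0 := ha0
  have ea1 : (v 1 - v 0) 1 = a1 := ha1
  have eb0 : (v 2 - v 1) 0 = b0 := hb0
  have eb1 : (v 2 - v 1) 1 = b1 := hb1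
  have ec0 : (v 0 - v 5) 0 = c0 := hc0
  have ec1 : (v 0 - v 5) 1 = c1 := hc1
  have ena0 : (v 0 - v 1) 0 = -a0 := by show v 0 0 - v 1 0 = -a0; linarith [ha0]
  have ena1 : (v 0 - v 1) 1 = -a1 := by show v 0 1 - v 1 1 = -a1; linarith [ha1]
  have enc0 : (v 5 - v 0) 0 = -c0 := by show v 5 0 - v 0 0 = -c0; linarith [hc0]
  have enc1 : (v 5 - v 0) 1 = -c1 := by show v 5 1 - v 0 1 = -c1; linarith [hc1]
  -- side lengths squared
  have hna : a0 ^ 2 + a1 ^ 2 = 4 := by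
    have h := hequi 0; rw [show ((0 : Fin 6) + 1) = 1 by decide] at h
    have h2 := key (v 1) (v 0); rw [h, ha0, ha1] at h2; nlinarith [h2]
  have hnb : b0 ^ 2 + b1 ^ 2 = 4 := by
    have h := hequi 1; rw [show ((1 : Fin 6) + 1) = 2 by decide] at h
    have h2 := key (v 2) (v 1); rw [h, hb0, hb1] at h2; nlinarith [h2]
  have hnc : c0 ^ 2 + c1 ^ 2 = 4 := by
    have h := hequi 5; rw [show ((5 : Fin 6) + 1) = 0 by decide] at h
    have h2 := key (v 0) (v 5); rw [h, hc0, hc1] at h2; nlinarith [h2]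
  -- norms
  have hn50 : ‖v 5 - v 0‖ = 2 := by
    have h := hequi 5; rw [show ((5 : Fin 6) + 1) = 0 by decide] at h
    rw [← dist_eq_norm, dist_comm, h]
  have hn10 : ‖v 1 - v 0‖ = 2 := by
    have h := hequi 0; rw [show ((0 : Fin 6) + 1) = 1 by decide] at h
    rw [← dist_eq_norm, h]
  have hn01 : ‖v 0 - v 1‖ = 2 := by rw [norm_sub_rev]; exact hn10
  have hn21 : ‖v 2 - v 1‖ = 2 := by
    have h := hequi 1; rw [show ((1 : Fin 6) + 1) = 2 by decide] at h
    rw [← dist_eq_norm, h]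
  -- cosines
  have hcx : cos x = -(c0 * a0 + c1 * a1) / 4 := by
    rw [hx, EuclideanGeometry.angle, InnerProductGeometry.cos_angle]
    simp only [vsub_eq_sub]
    rw [inner_eq, hn50, hn10, enc0, enc1, ea0, ea1]
    ring
  have hcy : cos y = -(a0 * b0 + a1 * b1) / 4 := by
    rw [hy, EuclideanGeometry.angle, InnerProductGeometry.cos_angle]
    simp only [vsub_eq_sub]
    rw [inner_eq, hn01, hn21, ena0, ena1, eb0, eb1]
    ring
  -- cross products positive by convexity
  have hcross_ca : 0 < c0 * a1 - c1 * a0 := by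
    have h := hconv 5
    rw [show ((5 : Fin 6) + 1) = 0 from rfl, show ((5 : Fin 6) + 2) = 1 from rfl,
      ec0, ec1, ea0, ea1] at h
    linarith
  have hcross_ab : 0 < a0 * b1 - a1 * b0 := by
    have h := hconv 0
    rw [show ((0 : Fin 6) + 1) = 1 from rfl, show ((0 : Fin 6) + 2) = 2 from rfl,
      ea0, ea1, eb0, eb1] at h
    linarith
  -- sines
  have hx0 : 0 ≤ x := le_trans (by positivity) (le_of_lt hxr.1)
  have hy0 : 0 ≤ y := le_trans (by positivity) (le_of_lt hyr.1)
  have hsx : sin x = (c0 * a1 - c1 * a0) / 4 := by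
    have hs0 : 0 ≤ sin x := Real.sin_nonneg_of_nonneg_of_le_pi hx0 (le_of_lt hxr.2)
    have hsq : sin x ^ 2 = 1 - cos x ^ 2 := by
      have := Real.sin_sq_add_cos_sq x; linarith
    rw [hcx] at hsq
    have lag : (c0 * a1 - c1 * a0) ^ 2 + (c0 * a0 + c1 * a1) ^ 2 = 16 := by
      linear_combination (a0 ^ 2 + a1 ^ 2) * hnc + 4 * hna
    have h1 : (sin x - (c0 * a1 - c1 * a0) / 4) * (sin x + (c0 * a1 - c1 * a0) / 4) = 0 := by
      linear_combination hsq - (1 / 16) * lag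
    rcases mul_eq_zero.mp h1 with h | h
    · linarith
    · linarith
  have hsy : sin y = (a0 * b1 - a1 * b0) / 4 := by
    have hs0 : 0 ≤ sin y := Real.sin_nonneg_of_nonneg_of_le_pi hy0 (le_of_lt hyr.2)
    have hsq : sin y ^ 2 = 1 - cos y ^ 2 := by
      have := Real.sin_sq_add_cos_sq y; linarith
    rw [hcy] at hsq
    have lag : (a0 * b1 - a1 * b0) ^ 2 + (a0 * b0 + a1 * b1) ^ 2 = 16 := by
      linear_combination (b0 ^ 2 + b1 ^ 2) * hna + 4 * hnb
    have h1 : (sin y - (a0 * b1 - a1 * b0) / 4) * (sin y + (a0 * b1 - a1 * b0) / 4) = 0 := by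
      linear_combination hsq - (1 / 16) * lag
    rcases mul_eq_zero.mp h1 with h | h
    · linarith
    · linarith
  -- position of O
  have hO : v 2 = (2 : ℝ) • O - v 5 := by
    have h := hsym 5; rwa [show ((5 : Fin 6) + 3) = 2 by decide] at h
  have hO0 : v 2 0 - O 0 = (a0 + b0 + c0) / 2 := by
    have h := congrArg (fun w => w 0) hO
    have h' : v 2 0 = 2 * O 0 - v 5 0 := h
    linarith [ha0, hb0, hc0]
  have hO1 : v 2 1 - O 1 = (a1 + b1 + c1) / 2 := by
    have h := congrArg (fun w => w 1) hO
    have h' : v 2 1 = 2 * O 1 - v 5 1 := h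
    linarith [ha1, hb1, hc1]
  -- final computation
  rw [key (v 2) O, hO0, hO1, Real.cos_add, hcx, hcy, hsx, hsy]
  linear_combination (1 / 4 - (b0 * c0 + b1 * c1) / 8) * hna + (1 / 4) * hnb + (1 / 4) * hnc
end

section
/- Define F(u) := 2 sin u − sin 2u. Let c > 1 + √2 and let u ∈ (π/2, π) satisfy F(u) ≥ c. Then u < 3π/4 and 1 − 2c·cot u < (1 + √2)². -/
open Real

/-- For `F(u) = 2 sin u − sin 2u`: if `c > 1 + √2` and `u ∈ (π/2, π)` satisfies
`F(u) ≥ c`, then `u < 3π/4` and `1 − 2c·cot u < (1 + √2)²`. -/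
theorem stmt_19 (c u : ℝ) (hc : 1 + Real.sqrt 2 < c)
    (hu : u ∈ Set.Ioo (π / 2) π) (hF : c ≤ 2 * sin u - sin (2 * u)) :
    u < 3 * π / 4 ∧ 1 - 2 * c * (cos u / sin u) < (1 + Real.sqrt 2) ^ 2 := by
  obtain ⟨h1, h2⟩ := hu
  have hπ := Real.pi_pos
  have hs : 0 < sin u := Real.sin_pos_of_pos_of_lt_pi (by linarith) h2
  have hsq2 : Real.sqrt 2 ^ 2 = 2 := Real.sq_sqrt (by norm_num)
  have hsq2p : (0:ℝ) < Real.sqrt 2 := Real.sqrt_pos.2 (by norm_num)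
  have hcos34 : Real.cos (3 * π / 4) = -(Real.sqrt 2 / 2) := by
    rw [show (3 * π / 4 : ℝ) = π - π / 4 by ring, Real.cos_pi_sub, Real.cos_pi_div_four]
  have hsc := Real.sin_sq_add_cos_sq u
  have h2u : Real.sin (2 * u) = 2 * Real.sin u * Real.cos u := Real.sin_two_mul u
  have hu34 : u < 3 * π / 4 := by
    by_contra h
    push_neg at h
    have hk : Real.cos u ≤ -(Real.sqrt 2 / 2) := by
      have := Real.cos_le_cos_of_nonneg_of_le_pi (by positivity : (0:ℝ) ≤ 3 * π / 4)
        (le_of_lt h2) h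
      linarith [hcos34 ▸ this]
    have : 2 * Real.sin u - Real.sin (2 * u) ≤ 1 + Real.sqrt 2 := by
      rw [h2u]
      nlinarith [sq_nonneg (Real.sin u + Real.cos u),
        sq_nonneg (2 * Real.sin u - Real.sqrt 2), hs.le, hsq2, hsq2p]
    linarith
  refine ⟨hu34, ?_⟩
  have hkneg : Real.cos u < 0 := Real.cos_neg_of_pi_div_two_lt_of_lt h1 (by linarith)
  have hk2 : -(Real.sqrt 2 / 2) < Real.cos u := by
    have := Real.cos_lt_cos_of_nonneg_of_le_pi (by linarith : (0:ℝ) ≤ u) (by linarith) hu34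
    linarith [hcos34 ▸ this]
  have hratio : Real.cos u / Real.sin u < 0 := div_neg_of_neg_of_pos hkneg hs
  have hstep : 1 - 2 * c * (Real.cos u / Real.sin u)
      ≤ 1 - 2 * (2 * Real.sin u - Real.sin (2 * u)) * (Real.cos u / Real.sin u) := by
    have := mul_le_mul_of_nonpos_right hF (le_of_lt hratio)
    linarith
  have heq : 1 - 2 * (2 * Real.sin u - Real.sin (2 * u)) * (Real.cos u / Real.sin u)
      = 1 - 4 * Real.cos u + 4 * Real.cos u ^ 2 := by
    rw [h2u]
    field_simp
    ring
  rw [heq] at hstep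
  have : 1 - 4 * Real.cos u + 4 * Real.cos u ^ 2 < (1 + Real.sqrt 2) ^ 2 := by
    nlinarith [hk2, hkneg, hsq2, hsq2p]
  linarith
end
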